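/- arXiv:2504.15243 — 10 statements merged into one kernel-verified Lean document; each statement's English description precedes it below -/
import Mathlib

section
/- Let E be a real inner product space, let F : E → ℝ be ρ₀-weakly convex, let h_k : E → ℝ be ρ₁-weakly convex for k = 1, …, m (m ≥ 1), and let β > 0. Then the hinge penalty objective Φ(x) = F(x) + (β/m) · Σ_{k=1}^m [h_k(x)]_+ is (ρ₀ + β·ρ₁)-weakly convex, i.e., the function x ↦ Φ(x) + ((ρ₀ + β·ρ₁)/2)·‖x‖² is convex on E. -/
/-!
The quadratic `ρ / 2 * ‖x‖ ^ 2` is linear in `ρ`, so weak convexity moduli add under sums and scale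
under nonnegative multiples; averaging `m` functions that are `ρ₁`-weakly convex with total weight
`β` therefore costs `β * ρ₁`. The hinge `[·]_+` preserves `ρ`-weak convexity for `ρ ≥ 0`, because
`max (f x) 0 + ρ / 2 * ‖x‖ ^ 2 = max (f x + ρ / 2 * ‖x‖ ^ 2) (ρ / 2 * ‖x‖ ^ 2)` is a maximum of two
convex functions.
-/

section WeakConvexity

variable {E : Type*} [SeminormedAddCommGroup E] [NormedSpace ℝ E] {s : Set E} {ρ σ : ℝ}
  {f g : E → ℝ}

def WeakConvexOn (s : Set E) (ρ : ℝ) (f : E → ℝ) : Prop :=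
  ConvexOn ℝ s fun x => f x + ρ / 2 * ‖x‖ ^ 2

namespace WeakConvexOn

lemma add (hf : WeakConvexOn s ρ f) (hg : WeakConvexOn s σ g) :
    WeakConvexOn s (ρ + σ) fun x => f x + g x :=
  (ConvexOn.add hf hg).congr fun x _ => by simp only [Pi.add_apply]; ring

lemma const_mul {c : ℝ} (hc : 0 ≤ c) (hf : WeakConvexOn s ρ f) :
    WeakConvexOn s (c * ρ) fun x => c * f x :=
  (ConvexOn.smul hc hf).congr fun x _ => by simp only [smul_eq_mul]; ring

lemma sum {ι : Type*} {t : Finset ι} {ρ : ι → ℝ} {f : ι → E → ℝ} (hs : Convex ℝ s)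
    (hf : ∀ i ∈ t, WeakConvexOn s (ρ i) (f i)) :
    WeakConvexOn s (∑ i ∈ t, ρ i) fun x => ∑ i ∈ t, f i x := by
  classical
  induction t using Finset.induction with
  | empty => simpa [WeakConvexOn] using convexOn_const (0 : ℝ) hs
  | insert i t hi ih =>
    simp only [Finset.sum_insert hi]
    exact (hf i (t.mem_insert_self i)).add (ih fun j hj => hf j (Finset.mem_insert_of_mem hj))

lemma posPart (hρ : 0 ≤ ρ) (hf : WeakConvexOn s ρ f) :
    WeakConvexOn s ρ fun x => max (f x) 0 := by
  have hq : ConvexOn ℝ s fun x => ρ / 2 * ‖x‖ ^ 2 :=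
    ((convexOn_norm hf.1).pow (fun _ _ => norm_nonneg _) 2).smul (by positivity)
  exact (ConvexOn.sup hf hq).congr fun x _ => by
    show max _ _ = max (f x) 0 + _
    rw [← max_add_add_right, zero_add]

end WeakConvexOn

end WeakConvexity

theorem hinge_penalty_weakly_convex_general
    {E : Type*} [NormedAddCommGroup E] [InnerProductSpace ℝ E]
    (m : ℕ) (hm : 1 ≤ m) (F : E → ℝ) (h : Fin m → E → ℝ)
    (ρ₀ ρ₁ β : ℝ) (hρ₁ : 0 ≤ ρ₁) (hβ : 0 < β)
    (hF : ConvexOn ℝ Set.univ (fun x => F x + ρ₀ / 2 * ‖x‖ ^ 2))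
    (hh : ∀ k, ConvexOn ℝ Set.univ (fun x => h k x + ρ₁ / 2 * ‖x‖ ^ 2)) :
    ConvexOn ℝ Set.univ
      (fun x => (F x + β / m * ∑ k, max (h k x) 0) + (ρ₀ + β * ρ₁) / 2 * ‖x‖ ^ 2) := by
  have hmean : WeakConvexOn Set.univ (β / m * ∑ _k : Fin m, ρ₁)
      fun x => β / m * ∑ k, max (h k x) 0 :=
    (WeakConvexOn.sum convex_univ fun k _ => WeakConvexOn.posPart hρ₁ (hh k)).const_mul
      (by positivity)
  have hmodulus : β / m * ∑ _k : Fin m, ρ₁ = β * ρ₁ := by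
    have : (m : ℝ) ≠ 0 := by positivity
    simp only [Finset.sum_const, Finset.card_univ, Fintype.card_fin, nsmul_eq_mul]
    field_simp
  rw [hmodulus] at hmean
  exact WeakConvexOn.add hF hmean

/-- The hinge penalty objective Φ(x) = F(x) + (β/m) · Σ_k [h_k(x)]_+ is
(ρ₀ + β·ρ₁)-weakly convex when F is ρ₀-weakly convex and each h_k is ρ₁-weakly convex. -/
theorem hinge_penalty_weakly_convex
    {E : Type*} [NormedAddCommGroup E] [InnerProductSpace ℝ E]
    (m : ℕ) (hm : 1 ≤ m) (F : E → ℝ) (h : Fin m → E → ℝ)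
    (ρ₀ ρ₁ β : ℝ) (hρ₀ : 0 ≤ ρ₀) (hρ₁ : 0 ≤ ρ₁) (hβ : 0 < β)
    (hF : ConvexOn ℝ Set.univ (fun x => F x + ρ₀ / 2 * ‖x‖ ^ 2))
    (hh : ∀ k, ConvexOn ℝ Set.univ (fun x => h k x + ρ₁ / 2 * ‖x‖ ^ 2)) :
    ConvexOn ℝ Set.univ
      (fun x => (F x + β / m * ∑ k, max (h k x) 0) + (ρ₀ + β * ρ₁) / 2 * ‖x‖ ^ 2) :=
  hinge_penalty_weakly_convex_general m hm F h ρ₀ ρ₁ β hρ₁ hβ hF hh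
end

section
/- Let E be a real inner product space, let h : E → ℝ be ρ-weakly convex, let x ∈ E, let w be a ρ-subgradient of h at x, and let ξ ∈ [0, 1] satisfy ξ = 1 if h(x) > 0 and ξ = 0 if h(x) < 0. Then ξ·w is a ρ-subgradient of the function y ↦ [h(y)]_+ at x; that is, for all y ∈ E: [h(y)]_+ ≥ [h(x)]_+ + ξ·⟪w, y − x⟫ − (ρ/2)·‖y − x‖². -/
open scoped RealInnerProductSpace BigOperators

/-- If w is a ρ-subgradient of h at x and ξ ∈ [0,1] with ξ = 1 when h(x) > 0 and
ξ = 0 when h(x) < 0, then ξ·w is a ρ-subgradient of y ↦ [h(y)]_+ at x. -/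
theorem hinge_subgradient
    {E : Type*} [NormedAddCommGroup E] [InnerProductSpace ℝ E]
    (h : E → ℝ) (ρ : ℝ) (hρ : 0 ≤ ρ)
    (hwc : ConvexOn ℝ Set.univ (fun x => h x + ρ / 2 * ‖x‖ ^ 2))
    (x : E) (w : E)
    (hw : ∀ y : E, h y ≥ h x + ⟪w, y - x⟫ - ρ / 2 * ‖y - x‖ ^ 2)
    (ξ : ℝ) (hξ0 : 0 ≤ ξ) (hξ1 : ξ ≤ 1)
    (hξpos : 0 < h x → ξ = 1) (hξneg : h x < 0 → ξ = 0) :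
    ∀ y : E, max (h y) 0 ≥ max (h x) 0 + ξ * ⟪w, y - x⟫ - ρ / 2 * ‖y - x‖ ^ 2 := by
  intro y
  have hle : h y ≤ max (h y) 0 := le_max_left _ _
  have h0 : (0:ℝ) ≤ max (h y) 0 := le_max_right _ _
  have hnn : 0 ≤ ρ / 2 * ‖y - x‖ ^ 2 := by positivity
  rcases lt_trichotomy (h x) 0 with hx | hx | hx
  · rw [hξneg hx, max_eq_right hx.le]
    nlinarith
  · rw [hx, max_self]
    rcases le_or_gt 0 (⟪w, y - x⟫ : ℝ) with hi | hi
    · have : ξ * ⟪w, y - x⟫ ≤ ⟪w, y - x⟫ := by nlinarith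
      have := hw y
      nlinarith
    · nlinarith
  · rw [hξpos hx, max_eq_left hx.le]
    have := hw y
    nlinarith
end

section
/- (Main exact penalty theorem.) Let E be a real Hilbert space. Let F : E → ℝ be ρ₀-weakly convex and L_F-Lipschitz, and let h_k : E → ℝ be ρ₁-weakly convex and L_h-Lipschitz for k = 1, …, m (m ≥ 1). Let β > 0, set C = ρ₀ + β·ρ₁, let 0 < θ < 1/C, let ε > 0 and δ > 0, and let Φ(x) = F(x) + (β/m)·Σ_{k=1}^m [h_k(x)]_+. Assume the regularity condition: for every x' ∈ E with max_k h_k(x') > 0 and every family w_1, …, w_m where each w_k is a ρ₁-subgradient of y ↦ [h_k(y)]_+ at x', one has ‖(1/m)·Σ_{k=1}^m w_k‖ ≥ δ. Assume β > (ε + L_F)/δ. Suppose x ∈ E, x̄ minimizes y ↦ Φ(y) + ‖y − x‖²/(2θ) over E, and ‖x − x̄‖ ≤ θ·ε. Then there exist multipliers λ_1, …, λ_m ≥ 0, a ρ₀-subgradient v of F at x̄, and for each k a ρ₁-subgradient w_k of h_k at x̄, such that: (i) ‖v + Σ_{k=1}^m λ_k·w_k‖ ≤ ε; (ii) h_k(x̄)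 ≤ 0 for every k; (iii) λ_k·h_k(x̄) ≤ 0 for every k, and λ_k = 0 whenever h_k(x̄) < 0. -/
/-!
Since `Φ + (C/2)‖·‖²` is convex, optimality of `xb` in the proximal problem makes
`g = θ⁻¹ (x - xb)` a `C`-subgradient of `Φ` at `xb`, and `‖g‖ ≤ ε`. The Moreau–Rockafellar sum
rule (a Hahn–Banach separation in `E × ℝ`) splits `g = v + (β/m) ∑ w'ₖ` with `v` a
`ρ₀`-subgradient of `F` and `w'ₖ` a `ρ₁`-subgradient of `[hₖ]₊`. If a constraint were violated,
regularity would give `β δ ≤ ‖g - v‖ ≤ ε + L_F`, contradicting the choice of `β`; so `xb` is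
feasible. At an inactive constraint `[hₖ]₊` vanishes near `xb`, which forces `w'ₖ = 0`; at an
active one the max rule (a separation in `ℝ²`) writes `w'ₖ = tₖ wₖ` with `tₖ ≥ 0` and `wₖ` a
`ρ₁`-subgradient of `hₖ`. The multipliers are `λₖ = (β/m) tₖ`.
-/

open Set Filter Topology
open scoped RealInnerProductSpace

theorem le_of_eventually_le_add_mul {a b c : ℝ} (h : ∀ᶠ t in 𝓝[>] (0 : ℝ), a ≤ b + c * t) :
    a ≤ b := by
  have hlim : Tendsto (fun t => b + c * t) (𝓝[>] (0 : ℝ)) (𝓝 b) := by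
    simpa using (Continuous.tendsto (by fun_prop : Continuous fun t : ℝ => b + c * t) 0).mono_left
      nhdsWithin_le_nhds
  exact ge_of_tendsto hlim h

section Subgradient

variable {E : Type*} [NormedAddCommGroup E]

theorem continuous_of_abs_sub_le_mul_norm {f : E → ℝ} {L : ℝ}
    (hf : ∀ x y, |f x - f y| ≤ L * ‖x - y‖) : Continuous f := by
  refine (LipschitzWith.of_dist_le_mul (K := L.toNNReal) fun x y => ?_).continuous
  rw [Real.dist_eq, dist_eq_norm, Real.coe_toNNReal']
  exact (hf x y).trans (mul_le_mul_of_nonneg_right (le_max_left _ _) (norm_nonneg _))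

variable [InnerProductSpace ℝ E]

def IsSubgradient (f : E → ℝ) (x v : E) : Prop :=
  ∀ y, f x + ⟪v, y - x⟫ ≤ f y

def IsWeakSubgradient (ρ : ℝ) (f : E → ℝ) (x v : E) : Prop :=
  ∀ y, f y ≥ f x + ⟪v, y - x⟫ - ρ / 2 * ‖y - x‖ ^ 2

def WeaklyConvex (ρ : ℝ) (f : E → ℝ) : Prop :=
  ConvexOn ℝ univ fun x => f x + ρ / 2 * ‖x‖ ^ 2

theorem exists_apply_eq_inner_add_mul [CompleteSpace E] (φ : E × ℝ →L[ℝ] ℝ) :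
    ∃ (z : E) (c : ℝ), ∀ y t, φ (y, t) = ⟪z, y⟫ + c * t := by
  refine ⟨(InnerProductSpace.toDual ℝ E).symm (φ.comp (.inl ℝ E ℝ)), φ (0, 1), fun y t => ?_⟩
  rw [InnerProductSpace.toDual_symm_apply, show ((y, t) : E × ℝ) = (y, 0) + t • (0, 1) by simp,
    map_add, map_smul, smul_eq_mul, mul_comm]
  rfl

/-- Moreau–Rockafellar: separate the strict epigraph of `f` from the hypograph of
`f x + g x - g` over `s`. -/
theorem exists_isSubgradient_of_isMinOn_add [CompleteSpace E] {f g : E → ℝ} {s : Set E} {x : E}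
    (hf : ConvexOn ℝ univ f) (hfc : Continuous f) (hg : ConvexOn ℝ s g) (hx : x ∈ s)
    (hmin : IsMinOn (f + g) s x) :
    ∃ v, IsSubgradient f x v ∧ ∀ y ∈ s, g x + ⟪-v, y - x⟫ ≤ g y := by
  set A : Set (E × ℝ) := {p | f p.1 < p.2}
  set B : Set (E × ℝ) := {p | p.1 ∈ s ∧ p.2 ≤ -g p.1 + (f x + g x)}
  have hA : Convex ℝ A := by simpa using hf.convex_strict_epigraph
  have hB : Convex ℝ B := (hg.neg.add_const _).convex_hypograph
  have hAB : Disjoint A B := by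
    refine Set.disjoint_left.mpr fun p hpA hpB => ?_
    have := hmin hpB.1
    simp only [A, B, mem_ofPred_eq, Pi.add_apply] at hpA hpB this
    linarith
  obtain ⟨φ, u, hφA, hφB⟩ :=
    geometric_hahn_banach_open hA (isOpen_lt (hfc.comp continuous_fst) continuous_snd) hB hAB
  obtain ⟨z, c, hφ⟩ := exists_apply_eq_inner_add_mul φ
  have hxB : u ≤ ⟪z, x⟫ + c * f x := by
    simpa [hφ] using hφB (x, f x) ⟨hx, by simp⟩
  have hc : c < 0 := by
    have := hφA (x, f x + 1) (by simp [A])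
    rw [hφ] at this
    linarith
  have hyA : ∀ y, ⟪z, y⟫ + c * f y ≤ u := fun y =>
    le_of_eventually_le_add_mul (c := -c) <| eventually_nhdsWithin_of_forall fun t ht => by
      have := hφA (y, f y + t) (by simpa [A] using ht)
      rw [hφ] at this
      linarith
  obtain ⟨v, rfl⟩ : ∃ v, z = (-c) • v :=
    ⟨(-c)⁻¹ • z, by rw [smul_smul, mul_inv_cancel₀ (by linarith), one_smul]⟩
  refine ⟨v, fun y => ?_, fun y hy => ?_⟩
  · have := hyA y
    simp only [real_inner_smul_left, inner_sub_right] at this hxB ⊢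
    nlinarith
  · have h₁ := hφB (y, -g y + (f x + g x)) ⟨hy, le_rfl⟩
    have h₂ := hyA x
    simp only [hφ, real_inner_smul_left, inner_sub_right, inner_neg_left] at h₁ h₂ ⊢
    nlinarith

theorem ConvexOn.exists_isSubgradient [CompleteSpace E] {f : E → ℝ} (hf : ConvexOn ℝ univ f)
    (hfc : Continuous f) (x : E) : ∃ v, IsSubgradient f x v := by
  obtain ⟨v, hv, -⟩ := exists_isSubgradient_of_isMinOn_add (g := 0) hf hfc
    (convexOn_const 0 (convex_singleton x)) (mem_singleton x)
    (isMinOn_iff.mpr fun y hy => by rw [mem_singleton_iff.mp hy])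
  exact ⟨v, hv⟩

theorem ConvexOn.sub_inner {f : E → ℝ} (hf : ConvexOn ℝ univ f) (u : E) :
    ConvexOn ℝ univ fun y => f y - ⟪u, y⟫ :=
  hf.sub ((innerSL ℝ u).toLinearMap.concaveOn convex_univ)

theorem IsSubgradient.exists_split_add [CompleteSpace E] {f g : E → ℝ} {x u : E}
    (hf : ConvexOn ℝ univ f) (hfc : Continuous f) (hg : ConvexOn ℝ univ g)
    (hu : IsSubgradient (fun y => f y + g y) x u) :
    ∃ v, IsSubgradient f x v ∧ IsSubgradient g x (u - v) := by
  obtain ⟨v, hv, hgv⟩ := exists_isSubgradient_of_isMinOn_add (hf.sub_inner u)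
    (hfc.sub (continuous_const.inner continuous_id)) hg (mem_univ x)
    (isMinOn_univ_iff.mpr fun y => by
      have := hu y
      simp only [Pi.add_apply, inner_sub_right] at this ⊢
      linarith)
  refine ⟨v + u, fun y => ?_, fun y => ?_⟩
  · have := hv y
    simp only [inner_add_left, inner_sub_right] at this ⊢
    linarith
  · simpa using hgv y (mem_univ y)

theorem IsSubgradient.exists_eq_smul_of_const_mul [CompleteSpace E] {f : E → ℝ} {x p : E} {c : ℝ}
    (hc : 0 ≤ c) (hf : ConvexOn ℝ univ f) (hfc : Continuous f)
    (hp : IsSubgradient (fun y => c * f y) x p) : ∃ a, IsSubgradient f x a ∧ p = c • a := by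
  rcases hc.eq_or_lt with rfl | hc
  · obtain ⟨a, ha⟩ := hf.exists_isSubgradient hfc x
    have := hp (x + p)
    simp only [zero_mul, add_sub_cancel_left, zero_add, real_inner_self_nonpos] at this
    exact ⟨a, ha, by simp [this]⟩
  · refine ⟨c⁻¹ • p, fun y => ?_, by rw [smul_smul, mul_inv_cancel₀ hc.ne', one_smul]⟩
    have := hp y
    rw [real_inner_smul_left]
    have key : c * (f x + c⁻¹ * ⟪p, y - x⟫) ≤ c * f y := by
      rwa [mul_add, ← mul_assoc, mul_inv_cancel₀ hc.ne', one_mul]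
    exact le_of_mul_le_mul_left key hc

theorem IsSubgradient.exists_isSubgradient_combo_of_max {f₁ f₂ : E → ℝ} {x w : E}
    (hf₁ : ConvexOn ℝ univ f₁) (hf₂ : ConvexOn ℝ univ f₂) (hx : f₁ x = f₂ x)
    (hw : IsSubgradient (fun y => max (f₁ y) (f₂ y)) x w) :
    ∃ t ∈ Icc (0 : ℝ) 1, IsSubgradient (fun y => t * f₁ y + (1 - t) * f₂ y) x w := by
  set φ₁ := (fun y => f₁ y - ⟪w, y⟫) + fun _ => ⟪w, x⟫ - f₁ x
  set φ₂ := (fun y => f₂ y - ⟪w, y⟫) + fun _ => ⟪w, x⟫ - f₂ x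
  have hφ₁ : ConvexOn ℝ univ φ₁ := (hf₁.sub_inner w).add_const _
  have hφ₂ : ConvexOn ℝ univ φ₂ := (hf₂.sub_inner w).add_const _
  -- the weights come from separating `0` from `A` in `ℝ²`
  set A : Set (ℝ × ℝ) := ⋃ y, Ioi (φ₁ y) ×ˢ Ioi (φ₂ y)
  have hA : Convex ℝ A := by
    intro p hp q hq a b ha hb hab
    simp only [A, mem_iUnion, mem_prod, mem_Ioi] at hp hq ⊢
    obtain ⟨y, hp₁, hp₂⟩ := hp
    obtain ⟨y', hq₁, hq₂⟩ := hq
    refine ⟨a • y + b • y', ?_, ?_⟩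
    · simpa using (hφ₁.convex_strict_epigraph (show (y, p.1) ∈ _ from ⟨mem_univ y, hp₁⟩)
        (show (y', q.1) ∈ _ from ⟨mem_univ y', hq₁⟩) ha hb hab).2
    · simpa using (hφ₂.convex_strict_epigraph (show (y, p.2) ∈ _ from ⟨mem_univ y, hp₂⟩)
        (show (y', q.2) ∈ _ from ⟨mem_univ y', hq₂⟩) ha hb hab).2
  have h0 : (0 : ℝ × ℝ) ∉ A := by
    simp only [A, mem_iUnion, mem_prod, mem_Ioi, not_exists, not_and, not_lt]
    intro y h₁
    by_contra! h₂
    have := hw y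
    simp only [hx, max_self, inner_sub_right] at this
    simp only [φ₁, φ₂, Pi.add_apply, Prod.fst_zero, Prod.snd_zero] at h₁ h₂
    exact (max_lt (by linarith) (by linarith)).not_ge this
  obtain ⟨ψ, hψ⟩ :=
    geometric_hahn_banach_open_point hA (isOpen_iUnion fun y => isOpen_Ioi.prod isOpen_Ioi) h0
  obtain ⟨μ₁, μ₂, hμ⟩ := exists_apply_eq_inner_add_mul ψ
  have hψA : ∀ y, ∀ s t : ℝ, φ₁ y < s → φ₂ y < t → μ₁ * s + μ₂ * t < 0 := fun y s t hs ht => by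
    simpa [hμ, mul_comm] using hψ (s, t) (mem_iUnion.mpr ⟨y, hs, ht⟩)
  have hφx : φ₁ x = 0 ∧ φ₂ x = 0 := by simp [φ₁, φ₂]
  have hμ₁ : μ₁ ≤ 0 := le_of_eventually_le_add_mul (c := -μ₂) <|
    eventually_nhdsWithin_of_forall fun t (ht : 0 < t) => by
      have := hψA x 1 t (by simp [hφx]) (by simpa [hφx] using ht)
      linarith
  have hμ₂ : μ₂ ≤ 0 := le_of_eventually_le_add_mul (c := -μ₁) <|
    eventually_nhdsWithin_of_forall fun t (ht : 0 < t) => by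
      have := hψA x t 1 (by simpa [hφx] using ht) (by simp [hφx])
      linarith
  have hσ : μ₁ + μ₂ < 0 := by
    have := hψA x 1 1 (by simp [hφx]) (by simp [hφx])
    linarith
  have key : ∀ y, μ₁ * φ₁ y + μ₂ * φ₂ y ≤ 0 := fun y =>
    le_of_eventually_le_add_mul (c := -(μ₁ + μ₂)) <|
      eventually_nhdsWithin_of_forall fun t (ht : 0 < t) => by
        have := hψA y (φ₁ y + t) (φ₂ y + t) (by linarith) (by linarith)
        linarith
  set t := μ₁ / (μ₁ + μ₂)
  refine ⟨t, ⟨div_nonneg_of_nonpos hμ₁ hσ.le, (div_le_one_of_neg hσ).mpr (by linarith)⟩,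
    fun y => ?_⟩
  have hσt : (μ₁ + μ₂) * (t * φ₁ y + (1 - t) * φ₂ y) = μ₁ * φ₁ y + μ₂ * φ₂ y := by
    have := hσ.ne
    simp only [t]
    field_simp
    ring
  have : 0 ≤ t * φ₁ y + (1 - t) * φ₂ y := by nlinarith [key y]
  simp only [φ₁, φ₂, Pi.add_apply] at this
  rw [inner_sub_right]
  linarith

theorem IsSubgradient.exists_eq_combo_of_max [CompleteSpace E] {f₁ f₂ : E → ℝ} {x w : E}
    (hf₁ : ConvexOn ℝ univ f₁) (hf₁c : Continuous f₁) (hf₂ : ConvexOn ℝ univ f₂)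
    (hf₂c : Continuous f₂) (hx : f₁ x = f₂ x)
    (hw : IsSubgradient (fun y => max (f₁ y) (f₂ y)) x w) :
    ∃ t ∈ Icc (0 : ℝ) 1, ∃ a b, IsSubgradient f₁ x a ∧ IsSubgradient f₂ x b ∧
      w = t • a + (1 - t) • b := by
  obtain ⟨t, ⟨ht₀, ht₁⟩, hwt⟩ := hw.exists_isSubgradient_combo_of_max hf₁ hf₂ hx
  have ht₁' : 0 ≤ 1 - t := sub_nonneg.2 ht₁
  obtain ⟨p, hp, hq⟩ :=
    hwt.exists_split_add (hf₁.smul ht₀) (continuous_const.mul hf₁c) (hf₂.smul ht₁')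
  obtain ⟨a, ha, rfl⟩ := hp.exists_eq_smul_of_const_mul ht₀ hf₁ hf₁c
  obtain ⟨b, hb, hb'⟩ := hq.exists_eq_smul_of_const_mul ht₁' hf₂ hf₂c
  exact ⟨t, ⟨ht₀, ht₁⟩, a, b, ha, hb, by rw [← hb', add_sub_cancel]⟩

theorem ConvexOn.isSubgradient_neg_of_isMinOn_add [CompleteSpace E] {Ψ s : E → ℝ} {x g : E}
    (hΨ : ConvexOn ℝ univ Ψ) (hs : HasGradientAt s g x) (hmin : IsMinOn (Ψ + s) univ x) :
    IsSubgradient Ψ x (-g) := by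
  intro y
  have hslope := (hs.hasFDerivAt.hasLineDerivAt (y - x)).tendsto_slope_zero_right
  have key : Ψ x - Ψ y ≤ ⟪g, y - x⟫ := ge_of_tendsto hslope <|
    eventually_of_mem (Ioo_mem_nhdsGT one_pos) fun t ⟨ht₀, ht₁⟩ => by
      have hconv := hΨ.2 (mem_univ x) (mem_univ y) (sub_nonneg.2 ht₁.le) ht₀.le (by ring)
      rw [show (1 - t) • x + t • y = x + t • (y - x) by module] at hconv
      have := isMinOn_univ_iff.mp hmin (x + t • (y - x))
      simp only [Pi.add_apply, smul_eq_mul] at hconv this ⊢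
      rw [le_inv_mul_iff₀ ht₀]
      nlinarith
  rw [inner_neg_left]
  linarith

theorem isWeakSubgradient_iff_isSubgradient {ρ : ℝ} {f : E → ℝ} {x v : E} :
    IsWeakSubgradient ρ f x v ↔
      IsSubgradient (fun y => f y + ρ / 2 * ‖y‖ ^ 2) x (v + ρ • x) := by
  refine forall_congr' fun y => ?_
  dsimp only
  rw [show ‖y‖ ^ 2 = ‖x‖ ^ 2 + 2 * ⟪x, y - x⟫ + ‖y - x‖ ^ 2 by
      rw [← norm_add_sq_real, add_sub_cancel],
    inner_add_left, real_inner_smul_left, ge_iff_le]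
  constructor <;> intro h <;> linarith

theorem IsWeakSubgradient.le_apply_add_smul {ρ : ℝ} {f : E → ℝ} {x v : E}
    (hv : IsWeakSubgradient ρ f x v) (t : ℝ) :
    f x + t * ‖v‖ ^ 2 - ρ / 2 * t ^ 2 * ‖v‖ ^ 2 ≤ f (x + t • v) := by
  have := hv (x + t • v)
  rwa [add_sub_cancel_left, real_inner_smul_right, real_inner_self_eq_norm_sq, norm_smul,
    mul_pow, Real.norm_eq_abs, sq_abs, ← mul_assoc] at this

theorem IsWeakSubgradient.eq_zero_of_isLocalMax {ρ : ℝ} {f : E → ℝ} {x v : E}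
    (hv : IsWeakSubgradient ρ f x v) (hf : IsLocalMax f x) : v = 0 := by
  have hline : Tendsto (fun t : ℝ => x + t • v) (𝓝[>] 0) (𝓝 x) := by
    simpa using ((Continuous.tendsto (by fun_prop) (0 : ℝ)).mono_left nhdsWithin_le_nhds :
      Tendsto (fun t : ℝ => x + t • v) (𝓝[>] 0) (𝓝 (x + (0 : ℝ) • v)))
  have : ‖v‖ ^ 2 ≤ 0 := le_of_eventually_le_add_mul (c := ρ / 2 * ‖v‖ ^ 2) <|
    ((hline.eventually hf).and self_mem_nhdsWithin).mono fun t ⟨hft, (ht : 0 < t)⟩ => by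
      have := hv.le_apply_add_smul t
      nlinarith
  simpa using this

theorem IsWeakSubgradient.norm_le [Nontrivial E] {ρ L : ℝ} {f : E → ℝ} {x v : E}
    (hv : IsWeakSubgradient ρ f x v) (hf : ∀ x y, |f x - f y| ≤ L * ‖x - y‖) : ‖v‖ ≤ L := by
  have hL : 0 ≤ L := by
    obtain ⟨a, b, hab⟩ := exists_pair_ne E
    exact nonneg_of_mul_nonneg_left ((abs_nonneg _).trans (hf a b))
      (norm_pos_iff.mpr (sub_ne_zero.mpr hab))
  have : ‖v‖ ^ 2 ≤ L * ‖v‖ := le_of_eventually_le_add_mul (c := ρ / 2 * ‖v‖ ^ 2) <|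
    eventually_nhdsWithin_of_forall fun t (ht : 0 < t) => by
      have h₁ := hv.le_apply_add_smul t
      have h₂ := (le_abs_self _).trans (hf (x + t • v) x)
      rw [add_sub_cancel_left, norm_smul, Real.norm_of_nonneg ht.le] at h₂
      nlinarith
  nlinarith [norm_nonneg v]

theorem IsWeakSubgradient.exists_eq_smul_of_const_mul {ρ c : ℝ} {f : E → ℝ} {x v : E}
    (hc : 0 < c) (hv : IsWeakSubgradient (c * ρ) (fun y => c * f y) x v) :
    ∃ w, IsWeakSubgradient ρ f x w ∧ v = c • w := by
  refine ⟨c⁻¹ • v, fun y => ?_, (smul_inv_smul₀ hc.ne' v).symm⟩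
  have := hv y
  rw [real_inner_smul_left]
  have key : c * (f x + c⁻¹ * ⟪v, y - x⟫ - ρ / 2 * ‖y - x‖ ^ 2) ≤ c * f y := by
    rw [mul_sub, mul_add, ← mul_assoc c c⁻¹, mul_inv_cancel₀ hc.ne', one_mul]
    linarith
  exact le_of_mul_le_mul_left key hc

theorem weaklyConvex_zero {ρ : ℝ} (hρ : 0 ≤ ρ) : WeaklyConvex ρ fun _ : E => (0 : ℝ) := by
  simpa [WeaklyConvex] using
    (convexOn_univ_norm.pow (fun _ _ => norm_nonneg _) 2).smul (by positivity : 0 ≤ ρ / 2)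

theorem WeaklyConvex.add {ρ σ : ℝ} {f g : E → ℝ} (hf : WeaklyConvex ρ f) (hg : WeaklyConvex σ g) :
    WeaklyConvex (ρ + σ) fun y => f y + g y :=
  (ConvexOn.add hf hg).congr fun y _ => by simp only [Pi.add_apply]; ring

theorem WeaklyConvex.sum {ι : Type*} {s : Finset ι} {ρ : ι → ℝ} {f : ι → E → ℝ}
    (hf : ∀ i ∈ s, WeaklyConvex (ρ i) (f i)) :
    WeaklyConvex (∑ i ∈ s, ρ i) fun y => ∑ i ∈ s, f i y := by
  classical
  induction s using Finset.induction_on with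
  | empty => simpa using weaklyConvex_zero (E := E) le_rfl
  | insert a s ha ih =>
    simp only [Finset.sum_insert ha]
    exact (hf a (Finset.mem_insert_self a s)).add
      (ih fun i hi => hf i (Finset.mem_insert_of_mem hi))

theorem WeaklyConvex.const_mul {ρ c : ℝ} {f : E → ℝ} (hc : 0 ≤ c) (hf : WeaklyConvex ρ f) :
    WeaklyConvex (c * ρ) fun y => c * f y :=
  (ConvexOn.smul hc hf).congr fun y _ => by simp only [smul_eq_mul]; ring

theorem WeaklyConvex.posPart {ρ : ℝ} {f : E → ℝ} (hρ : 0 ≤ ρ) (hf : WeaklyConvex ρ f) :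
    WeaklyConvex ρ fun y => max (f y) 0 :=
  (ConvexOn.sup hf (weaklyConvex_zero hρ)).congr fun y _ => by
    simp only [Pi.sup_apply, ← max_add_add_right, zero_add]

theorem IsWeakSubgradient.exists_split_add [CompleteSpace E] {ρ σ : ℝ} {f g : E → ℝ} {x u : E}
    (hf : WeaklyConvex ρ f) (hfc : Continuous f) (hg : WeaklyConvex σ g)
    (hu : IsWeakSubgradient (ρ + σ) (fun y => f y + g y) x u) :
    ∃ v, IsWeakSubgradient ρ f x v ∧ IsWeakSubgradient σ g x (u - v) := by
  rw [isWeakSubgradient_iff_isSubgradient] at hu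
  obtain ⟨v, hv, hgv⟩ := IsSubgradient.exists_split_add hf (by fun_prop) hg
    (show IsSubgradient (fun y => (f y + ρ / 2 * ‖y‖ ^ 2) + (g y + σ / 2 * ‖y‖ ^ 2)) x
      (u + (ρ + σ) • x) from fun y => by have := hu y; dsimp only at this ⊢; linarith)
  refine ⟨v - ρ • x, ?_, ?_⟩
  · rwa [isWeakSubgradient_iff_isSubgradient, sub_add_cancel]
  · rw [isWeakSubgradient_iff_isSubgradient]
    convert hgv using 1
    module

theorem IsWeakSubgradient.exists_split_sum [CompleteSpace E] {ι : Type*} {s : Finset ι}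
    {ρ : ι → ℝ} {f : ι → E → ℝ} {x u : E} (hf : ∀ i ∈ s, WeaklyConvex (ρ i) (f i))
    (hfc : ∀ i ∈ s, Continuous (f i))
    (hu : IsWeakSubgradient (∑ i ∈ s, ρ i) (fun y => ∑ i ∈ s, f i y) x u) :
    ∃ v : ι → E, (∀ i ∈ s, IsWeakSubgradient (ρ i) (f i) x (v i)) ∧ u = ∑ i ∈ s, v i := by
  classical
  induction s using Finset.induction_on generalizing u with
  | empty =>
    simp only [Finset.sum_empty] at hu ⊢
    exact ⟨0, by simp, hu.eq_zero_of_isLocalMax isLocalMax_const⟩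
  | insert a s ha ih =>
    simp only [Finset.sum_insert ha] at hu
    have hf' : ∀ i ∈ s, WeaklyConvex (ρ i) (f i) := fun i hi => hf i (Finset.mem_insert_of_mem hi)
    obtain ⟨va, hva, hrest⟩ := hu.exists_split_add (hf a (Finset.mem_insert_self a s))
      (hfc a (Finset.mem_insert_self a s)) (WeaklyConvex.sum hf')
    obtain ⟨v, hv, hsum⟩ := ih hf' (fun i hi => hfc i (Finset.mem_insert_of_mem hi)) hrest
    refine ⟨Function.update v a va, fun i hi => ?_, ?_⟩
    · rcases Finset.mem_insert.mp hi with rfl | hi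
      · simpa using hva
      · rw [Function.update_of_ne (ne_of_mem_of_not_mem hi ha)]
        exact hv i hi
    · rw [Finset.sum_insert ha, Function.update_self, Finset.sum_update_of_notMem ha, ← hsum,
        add_sub_cancel]

theorem IsWeakSubgradient.exists_eq_smul_of_posPart [CompleteSpace E] {ρ : ℝ} {h : E → ℝ}
    {x w : E} (hρ : 0 ≤ ρ) (hh : WeaklyConvex ρ h) (hhc : Continuous h) (hx : h x ≤ 0)
    (hw : IsWeakSubgradient ρ (fun y => max (h y) 0) x w) :
    ∃ (t : ℝ) (a : E), 0 ≤ t ∧ IsWeakSubgradient ρ h x a ∧ w = t • a ∧ (h x < 0 → t = 0) := by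
  have hhc' : Continuous fun y => h y + ρ / 2 * ‖y‖ ^ 2 := by fun_prop
  rcases hx.lt_or_eq with hneg | hzero
  · obtain ⟨a, ha⟩ := ConvexOn.exists_isSubgradient hh hhc' x
    refine ⟨0, a - ρ • x, le_rfl, by rwa [isWeakSubgradient_iff_isSubgradient, sub_add_cancel],
      ?_, fun _ => rfl⟩
    rw [zero_smul]
    refine hw.eq_zero_of_isLocalMax ?_
    filter_upwards [hhc.continuousAt.eventually_lt continuousAt_const hneg] with y hy
    simp [max_eq_right hy.le, max_eq_right hneg.le]
  · rw [isWeakSubgradient_iff_isSubgradient] at hw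
    obtain ⟨t, ⟨ht₀, -⟩, a, b, ha, hb, hwab⟩ :=
      IsSubgradient.exists_eq_combo_of_max (x := x) (f₂ := fun y => 0 + ρ / 2 * ‖y‖ ^ 2) hh hhc'
        (weaklyConvex_zero hρ) (by fun_prop) (by simp [hzero])
        (by simpa only [max_add_add_right] using hw)
    have hb : b = ρ • x := by
      have : IsWeakSubgradient ρ (fun _ => 0) x (b - ρ • x) := by
        rwa [isWeakSubgradient_iff_isSubgradient, sub_add_cancel]
      exact sub_eq_zero.mp (this.eq_zero_of_isLocalMax isLocalMax_const)
    refine ⟨t, a - ρ • x, ht₀, by rwa [isWeakSubgradient_iff_isSubgradient, sub_add_cancel], ?_,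
      fun h' => absurd hzero h'.ne⟩
    rw [hb] at hwab
    rw [eq_sub_of_add_eq hwab]
    module

theorem WeaklyConvex.isWeakSubgradient_of_prox [CompleteSpace E] {C θ : ℝ} {Φ : E → ℝ}
    {x xb : E} (hΦ : WeaklyConvex C Φ)
    (hmin : ∀ y, Φ xb + ‖xb - x‖ ^ 2 / (2 * θ) ≤ Φ y + ‖y - x‖ ^ 2 / (2 * θ)) :
    IsWeakSubgradient C Φ xb (θ⁻¹ • (x - xb)) := by
  have hs : HasGradientAt (fun y => (2 * θ)⁻¹ * ‖y - x‖ ^ 2 - C / 2 * ‖y‖ ^ 2)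
      (θ⁻¹ • (xb - x) - C • xb) xb := by
    rw [hasGradientAt_iff_hasFDerivAt]
    refine ((((hasFDerivAt_id xb).sub_const x).norm_sq.const_mul (2 * θ)⁻¹).sub
      ((hasStrictFDerivAt_norm_sq xb).hasFDerivAt.const_mul (C / 2))).congr_fderiv ?_
    ext d
    simp
    ring
  rw [isWeakSubgradient_iff_isSubgradient]
  convert hΦ.isSubgradient_neg_of_isMinOn_add hs
    (isMinOn_univ_iff.mpr fun y => by
      have := hmin y
      simp only [Pi.add_apply, div_eq_inv_mul] at this ⊢
      linarith) using 1
  module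

end Subgradient

theorem le_div_of_sub_eq_smul {E : Type*} [NormedAddCommGroup E] [NormedSpace ℝ E]
    {g v a : E} {β δ ε L : ℝ} (hβ : 0 ≤ β) (hδ : 0 < δ) (hg : ‖g‖ ≤ ε) (hv : ‖v‖ ≤ L)
    (ha : δ ≤ ‖a‖) (hgv : g - v = β • a) : β ≤ (ε + L) / δ := by
  have : β * ‖a‖ ≤ ε + L := calc
    _ = ‖g - v‖ := by rw [hgv, norm_smul, Real.norm_of_nonneg hβ]
    _ ≤ ε + L := (norm_sub_le _ _).trans (add_le_add hg hv)
  rw [le_div_iff₀ hδ]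
  nlinarith

theorem hinge_exact_penalty_nearly_KKT_general
    {E : Type*} [NormedAddCommGroup E] [InnerProductSpace ℝ E] [CompleteSpace E]
    (m : ℕ) (hm : 1 ≤ m) (F : E → ℝ) (h : Fin m → E → ℝ)
    (ρ₀ ρ₁ L_F L_h β θ ε δ : ℝ)
    (hρ₁ : 0 ≤ ρ₁) (hβ : 0 < β)
    -- F is ρ₀-weakly convex and L_F-Lipschitz
    (hFwc : ConvexOn ℝ Set.univ (fun x => F x + ρ₀ / 2 * ‖x‖ ^ 2))
    (hFlip : ∀ x y : E, |F x - F y| ≤ L_F * ‖x - y‖)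
    -- each h_k is ρ₁-weakly convex and L_h-Lipschitz
    (hhwc : ∀ k, ConvexOn ℝ Set.univ (fun x => h k x + ρ₁ / 2 * ‖x‖ ^ 2))
    (hhlip : ∀ k, ∀ x y : E, |h k x - h k y| ≤ L_h * ‖x - y‖)
    -- parameters: C = ρ₀ + β·ρ₁, 0 < θ < 1/C, ε > 0, δ > 0
    (hθ : 0 < θ) (hδ : 0 < δ)
    -- regularity condition on the constraints at violating points
    (hreg : ∀ x' : E, (∃ k, 0 < h k x') →
      ∀ w : Fin m → E,
        (∀ k, ∀ y : E,
          max (h k y) 0 ≥ max (h k x') 0 + ⟪w k, y - x'⟫ - ρ₁ / 2 * ‖y - x'‖ ^ 2) →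
        δ ≤ ‖(1 / (m : ℝ)) • ∑ k, w k‖)
    -- constant penalty parameter β > (ε + L_F)/δ
    (hβδ : (ε + L_F) / δ < β)
    -- xb minimizes y ↦ Φ(y) + ‖y − x‖²/(2θ), and ‖x − xb‖ ≤ θ·ε
    (x xb : E)
    (hmin : ∀ y : E,
      (F xb + β / m * ∑ k, max (h k xb) 0) + ‖xb - x‖ ^ 2 / (2 * θ)
        ≤ (F y + β / m * ∑ k, max (h k y) 0) + ‖y - x‖ ^ 2 / (2 * θ))
    (hclose : ‖x - xb‖ ≤ θ * ε) :
    ∃ (lam : Fin m → ℝ) (v : E) (w : Fin m → E),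
      (∀ k, 0 ≤ lam k) ∧
      -- v is a ρ₀-subgradient of F at xb
      (∀ y : E, F y ≥ F xb + ⟪v, y - xb⟫ - ρ₀ / 2 * ‖y - xb‖ ^ 2) ∧
      -- each w_k is a ρ₁-subgradient of h_k at xb
      (∀ k, ∀ y : E, h k y ≥ h k xb + ⟪w k, y - xb⟫ - ρ₁ / 2 * ‖y - xb‖ ^ 2) ∧
      -- (i) approximate stationarity of the Lagrangian
      ‖v + ∑ k, lam k • w k‖ ≤ ε ∧
      -- (ii) feasibility
      (∀ k, h k xb ≤ 0) ∧
      -- (iii) complementary slackness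
      (∀ k, lam k * h k xb ≤ 0) ∧ (∀ k, h k xb < 0 → lam k = 0) := by
  have hc : 0 < β / m := div_pos hβ (by exact_mod_cast hm)
  have hhc : ∀ k, Continuous (h k) := fun k => continuous_of_abs_sub_le_mul_norm (hhlip k)
  have hpen : ∀ k ∈ Finset.univ, WeaklyConvex (β / m * ρ₁) fun y => β / m * max (h k y) 0 :=
    fun k _ => (WeaklyConvex.posPart hρ₁ (hhwc k)).const_mul hc.le
  have hprox : IsWeakSubgradient (ρ₀ + ∑ _k : Fin m, β / m * ρ₁)
      (fun y => F y + ∑ k, β / m * max (h k y) 0) xb (θ⁻¹ • (x - xb)) :=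
    (WeaklyConvex.add hFwc (.sum hpen)).isWeakSubgradient_of_prox
      (by simpa only [Finset.mul_sum] using hmin)
  obtain ⟨v, hv, hpenv⟩ :=
    hprox.exists_split_add hFwc (continuous_of_abs_sub_le_mul_norm hFlip) (.sum hpen)
  obtain ⟨v', hv', hsum⟩ :=
    hpenv.exists_split_sum hpen fun k _ => continuous_const.mul ((hhc k).max continuous_const)
  choose w' hw' hv'w' using fun k => (hv' k (Finset.mem_univ k)).exists_eq_smul_of_const_mul hc
  have hgε : ‖θ⁻¹ • (x - xb)‖ ≤ ε := by
    rwa [norm_smul, Real.norm_of_nonneg (inv_nonneg.2 hθ.le), inv_mul_le_iff₀ hθ]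
  have hfeas : ∀ k, h k xb ≤ 0 := by
    by_contra! hviol
    have hδw := hreg xb hviol w' hw'
    have : Nontrivial E := nontrivial_of_ne _ 0 (norm_pos_iff.mp (hδ.trans_le hδw))
    refine hβδ.not_ge (le_div_of_sub_eq_smul hβ.le hδ hgε (hv.norm_le hFlip) hδw ?_)
    rw [hsum, smul_smul, Finset.smul_sum]
    exact Finset.sum_congr rfl fun k _ => by rw [hv'w' k, mul_one_div]
  choose t w ht hw hw't ht0 using
    fun k => (hw' k).exists_eq_smul_of_posPart hρ₁ (hhwc k) (hhc k) (hfeas k)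
  refine ⟨fun k => β / m * t k, v, w, fun k => mul_nonneg hc.le (ht k), hv, hw, ?_, hfeas,
    fun k => mul_nonpos_of_nonneg_of_nonpos (mul_nonneg hc.le (ht k)) (hfeas k),
    fun k hk => by simp [ht0 k hk]⟩
  have : ∑ k, (β / m * t k) • w k = θ⁻¹ • (x - xb) - v := by
    simp only [hsum, hv'w', hw't, mul_smul]
  rwa [this, add_sub_cancel]

/-- Main exact penalty theorem: a nearly ε-stationary point of the hinge penalty
objective Φ(x) = F(x) + (β/m)·Σ_k [h_k(x)]_+ is a nearly ε-KKT point of the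
original constrained problem, under the subgradient regularity condition on the
constraints and β > (ε + L_F)/δ. -/
theorem hinge_exact_penalty_nearly_KKT
    {E : Type*} [NormedAddCommGroup E] [InnerProductSpace ℝ E] [CompleteSpace E]
    (m : ℕ) (hm : 1 ≤ m) (F : E → ℝ) (h : Fin m → E → ℝ)
    (ρ₀ ρ₁ L_F L_h β θ ε δ : ℝ)
    (hρ₀ : 0 ≤ ρ₀) (hρ₁ : 0 ≤ ρ₁) (hβ : 0 < β)
    -- F is ρ₀-weakly convex and L_F-Lipschitz
    (hFwc : ConvexOn ℝ Set.univ (fun x => F x + ρ₀ / 2 * ‖x‖ ^ 2))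
    (hFlip : ∀ x y : E, |F x - F y| ≤ L_F * ‖x - y‖)
    -- each h_k is ρ₁-weakly convex and L_h-Lipschitz
    (hhwc : ∀ k, ConvexOn ℝ Set.univ (fun x => h k x + ρ₁ / 2 * ‖x‖ ^ 2))
    (hhlip : ∀ k, ∀ x y : E, |h k x - h k y| ≤ L_h * ‖x - y‖)
    -- parameters: C = ρ₀ + β·ρ₁, 0 < θ < 1/C, ε > 0, δ > 0
    (hθ : 0 < θ) (hθC : θ * (ρ₀ + β * ρ₁) < 1) (hε : 0 < ε) (hδ : 0 < δ)
    -- regularity condition on the constraints at violating points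
    (hreg : ∀ x' : E, (∃ k, 0 < h k x') →
      ∀ w : Fin m → E,
        (∀ k, ∀ y : E,
          max (h k y) 0 ≥ max (h k x') 0 + ⟪w k, y - x'⟫ - ρ₁ / 2 * ‖y - x'‖ ^ 2) →
        δ ≤ ‖(1 / (m : ℝ)) • ∑ k, w k‖)
    -- constant penalty parameter β > (ε + L_F)/δ
    (hβδ : (ε + L_F) / δ < β)
    -- xb minimizes y ↦ Φ(y) + ‖y − x‖²/(2θ), and ‖x − xb‖ ≤ θ·ε
    (x xb : E)
    (hmin : ∀ y : E,
      (F xb + β / m * ∑ k, max (h k xb) 0) + ‖xb - x‖ ^ 2 / (2 * θ)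
        ≤ (F y + β / m * ∑ k, max (h k y) 0) + ‖y - x‖ ^ 2 / (2 * θ))
    (hclose : ‖x - xb‖ ≤ θ * ε) :
    ∃ (lam : Fin m → ℝ) (v : E) (w : Fin m → E),
      (∀ k, 0 ≤ lam k) ∧
      -- v is a ρ₀-subgradient of F at xb
      (∀ y : E, F y ≥ F xb + ⟪v, y - xb⟫ - ρ₀ / 2 * ‖y - xb‖ ^ 2) ∧
      -- each w_k is a ρ₁-subgradient of h_k at xb
      (∀ k, ∀ y : E, h k y ≥ h k xb + ⟪w k, y - xb⟫ - ρ₁ / 2 * ‖y - xb‖ ^ 2) ∧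
      -- (i) approximate stationarity of the Lagrangian
      ‖v + ∑ k, lam k • w k‖ ≤ ε ∧
      -- (ii) feasibility
      (∀ k, h k xb ≤ 0) ∧
      -- (iii) complementary slackness
      (∀ k, lam k * h k xb ≤ 0) ∧ (∀ k, h k xb < 0 → lam k = 0) :=
  hinge_exact_penalty_nearly_KKT_general m hm F h ρ₀ ρ₁ L_F L_h β θ ε δ hρ₁ hβ hFwc hFlip hhwc hhlip
    hθ hδ hreg hβδ x xb hmin hclose
end

section
/- (Feasibility step of the exact penalty theorem.) Let E be a real inner product space, let h_k : E → ℝ be ρ₁-weakly convex for k = 1, …, m (m ≥ 1), let β > 0, δ > 0, L_F ≥ 0, ε ≥ 0 with β > (ε + L_F)/δ. Assume the regularity condition: for every x' ∈ E with max_k h_k(x') > 0 and every family w_1, …, w_m where each w_k is a ρ₁-subgradient of y ↦ [h_k(y)]_+ at x', one has ‖(1/m)·Σ_{k=1}^m w_k‖ ≥ δ. Let x̄ ∈ E, let v ∈ E with ‖v‖ ≤ L_F, and suppose that for each k there is a ρ₁-subgradient w_k of y ↦ [h_k(y)]_+ at x̄ with ‖v + (β/m)·Σ_{k=1}^m w_k‖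 ≤ ε. Then h_k(x̄) ≤ 0 for every k = 1, …, m. -/
open scoped RealInnerProductSpace BigOperators

/-- Feasibility step of the exact penalty theorem: if an approximate stationarity
condition of the penalized objective holds at xb with β > (ε + L_F)/δ, under the
subgradient regularity condition, then xb is feasible: h_k(xb) ≤ 0 for all k. -/
theorem hinge_exact_penalty_feasibility
    {E : Type*} [NormedAddCommGroup E] [InnerProductSpace ℝ E]
    (m : ℕ) (hm : 1 ≤ m) (h : Fin m → E → ℝ)
    (ρ₁ β δ L_F ε : ℝ)
    (hρ₁ : 0 ≤ ρ₁) (hβ : 0 < β) (hδ : 0 < δ) (hLF : 0 ≤ L_F) (hε : 0 ≤ ε)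
    (hβδ : (ε + L_F) / δ < β)
    -- each h_k is ρ₁-weakly convex
    (hhwc : ∀ k, ConvexOn ℝ Set.univ (fun x => h k x + ρ₁ / 2 * ‖x‖ ^ 2))
    -- regularity condition at violating points
    (hreg : ∀ x' : E, (∃ k, 0 < h k x') →
      ∀ w : Fin m → E,
        (∀ k, ∀ y : E,
          max (h k y) 0 ≥ max (h k x') 0 + ⟪w k, y - x'⟫ - ρ₁ / 2 * ‖y - x'‖ ^ 2) →
        δ ≤ ‖(1 / (m : ℝ)) • ∑ k, w k‖)
    (xb : E) (v : E) (hv : ‖v‖ ≤ L_F)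
    (w : Fin m → E)
    -- each w_k is a ρ₁-subgradient of y ↦ [h_k(y)]_+ at xb
    (hw : ∀ k, ∀ y : E,
      max (h k y) 0 ≥ max (h k xb) 0 + ⟪w k, y - xb⟫ - ρ₁ / 2 * ‖y - xb‖ ^ 2)
    (hstat : ‖v + (β / m) • ∑ k, w k‖ ≤ ε) :
    ∀ k, h k xb ≤ 0 := by
  intro k
  by_contra hk
  push_neg at hk
  have hδle := hreg xb ⟨k, hk⟩ w hw
  have hm' : (0:ℝ) < m := by exact_mod_cast Nat.lt_of_lt_of_le Nat.zero_lt_one hm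
  -- ‖(β/m) • ∑ w‖ ≤ ε + L_F
  have h1 : ‖(β / m) • ∑ k, w k‖ ≤ ε + L_F := by
    have heq : (β / m) • ∑ k, w k = (v + (β / m) • ∑ k, w k) - v := by abel
    rw [heq]
    calc ‖(v + (β / m) • ∑ k, w k) - v‖ ≤ ‖v + (β / m) • ∑ k, w k‖ + ‖v‖ := norm_sub_le _ _
      _ ≤ ε + L_F := add_le_add hstat hv
  have h2 : ‖(β / m) • ∑ k, w k‖ = β * ‖(1 / (m:ℝ)) • ∑ k, w k‖ := by
    rw [norm_smul, norm_smul]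
    rw [Real.norm_eq_abs, Real.norm_eq_abs, abs_of_pos (div_pos hβ hm'),
      abs_of_pos (by positivity : (0:ℝ) < 1 / (m:ℝ))]
    ring
  have h3 : β * δ ≤ β * ‖(1 / (m:ℝ)) • ∑ k, w k‖ :=
    mul_le_mul_of_nonneg_left hδle hβ.le
  have h4 : ε + L_F < β * δ := (div_lt_iff₀ hδ).mp hβδ
  linarith [h2 ▸ h1]
end

section
/- Let E be a real inner product space, let φ : E → ℝ be ρ-weakly convex, let θ > 0 with θ·ρ < 1, let x ∈ E, and suppose x̄ minimizes y ↦ φ(y) + ‖y − x‖²/(2θ) over E. Then (x − x̄)/θ is a ρ-subgradient of φ at x̄: for all y ∈ E, φ(y) ≥ φ(x̄) + ⟪(x − x̄)/θ, y − x̄⟫ − (ρ/2)·‖y − x̄‖². In particular, there exists a ρ-subgradient of φ at x̄ whose norm equals ‖x − x̄‖/θ, so the distance from 0 to the subdifferential of φ at x̄ is at most ‖x − x̄‖/θ. -/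
open scoped RealInnerProductSpace BigOperators

/-- If xb minimizes the proximal subproblem y ↦ φ(y) + ‖y − x‖²/(2θ), then
(x − xb)/θ is a ρ-subgradient of φ at xb; in particular there is a ρ-subgradient
of φ at xb of norm ‖x − xb‖/θ. -/
theorem prox_point_subgradient
    {E : Type*} [NormedAddCommGroup E] [InnerProductSpace ℝ E]
    (φ : E → ℝ) (ρ θ : ℝ) (hρ : 0 ≤ ρ)
    (hwc : ConvexOn ℝ Set.univ (fun x => φ x + ρ / 2 * ‖x‖ ^ 2))
    (hθ : 0 < θ) (hθρ : θ * ρ < 1) (x xb : E)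
    (hmin : ∀ y : E, φ xb + ‖xb - x‖ ^ 2 / (2 * θ) ≤ φ y + ‖y - x‖ ^ 2 / (2 * θ)) :
    (∀ y : E, φ y ≥ φ xb + ⟪(1 / θ) • (x - xb), y - xb⟫ - ρ / 2 * ‖y - xb‖ ^ 2) ∧
    ∃ v : E, (∀ y : E, φ y ≥ φ xb + ⟪v, y - xb⟫ - ρ / 2 * ‖y - xb‖ ^ 2) ∧
      ‖v‖ = ‖x - xb‖ / θ := by
  have main : ∀ y : E, φ y ≥ φ xb + ⟪(1 / θ) • (x - xb), y - xb⟫ - ρ / 2 * ‖y - xb‖ ^ 2 := by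
    intro y
    set u := y - xb with hu
    have hinner : ⟪(1 / θ) • (x - xb), u⟫ = (1/θ) * ⟪x - xb, u⟫ := real_inner_smul_left _ _ _
    have h2θ : (0:ℝ) < 2*θ := by linarith
    -- polynomial key inequality
    have key : ∀ t : ℝ, 0 < t → t ≤ 1 →
        2*θ*t*(φ y - φ xb) ≥ 2*t*⟪x - xb, u⟫ - t^2*‖u‖^2 - θ*ρ*t*(1-t)*‖u‖^2 := by
      intro t ht ht1
      have hyt : (1 - t) • xb + t • y = xb + t • u := by
        rw [hu]; module
      have hconv := hwc.2 (Set.mem_univ xb) (Set.mem_univ y) (by linarith : (0:ℝ) ≤ 1 - t) ht.le (by ring)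
      simp only [smul_eq_mul] at hconv
      rw [hyt] at hconv
      have hmin' := hmin (xb + t • u)
      have hmin2 : φ xb * (2*θ) + ‖xb - x‖^2 ≤ φ (xb + t • u) * (2*θ) + ‖xb + t • u - x‖^2 := by
        have := mul_le_mul_of_nonneg_left hmin' h2θ.le
        field_simp at this
        linarith [this]
      have e1 : ‖xb + t • u - x‖^2 = ‖xb - x‖^2 + 2*(t*⟪xb - x, u⟫) + t^2*‖u‖^2 := by
        have h : xb + t • u - x = (xb - x) + t • u := by abel
        rw [h, @norm_add_sq_real, real_inner_smul_right, norm_smul]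
        simp [abs_of_pos ht]
        ring
      have e2 : ‖xb + t • u‖^2 = ‖xb‖^2 + 2*(t*⟪xb, u⟫) + t^2*‖u‖^2 := by
        rw [@norm_add_sq_real, real_inner_smul_right, norm_smul]
        simp [abs_of_pos ht]
        ring
      have e3 : ‖y‖^2 = ‖xb‖^2 + 2*⟪xb, u⟫ + ‖u‖^2 := by
        have h : y = xb + u := by rw [hu]; abel
        rw [h, @norm_add_sq_real]
      have e4 : ⟪x - xb, u⟫ = - ⟪xb - x, u⟫ := by
        rw [show x - xb = -(xb - x) by abel, inner_neg_left]
      rw [e1] at hmin2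
      rw [e2, e3] at hconv
      have hconv2 := mul_le_mul_of_nonneg_left hconv h2θ.le
      rw [e4]
      nlinarith [hconv2, hmin2]
    -- limit t → 0
    rw [ge_iff_le, hinner, ← sub_nonneg]
    set D := φ y - (φ xb + (1/θ) * ⟪x - xb, u⟫ - ρ / 2 * ‖u‖ ^ 2) with hD
    have hC : (0:ℝ) ≤ (1/(2*θ) - ρ/2) * ‖u‖^2 := by
      apply mul_nonneg _ (sq_nonneg _)
      rw [sub_nonneg, div_le_div_iff₀ (by norm_num) h2θ]
      nlinarith
    set C := (1/(2*θ) - ρ/2) * ‖u‖^2 with hCdef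
    have hDt : ∀ t : ℝ, 0 < t → t ≤ 1 → -(t*C) ≤ D := by
      intro t ht ht1
      have hk := key t ht ht1
      rw [ge_iff_le, ← sub_nonneg] at hk
      have h2θt : (0:ℝ) < 2*θ*t := by positivity
      have heq : D + t*C =
          (2*θ*t*(φ y - φ xb) - (2*t*⟪x - xb, u⟫ - t^2*‖u‖^2 - θ*ρ*t*(1-t)*‖u‖^2)) / (2*θ*t) := by
        rw [hD, hCdef]
        field_simp
        ring
      have := div_nonneg hk h2θt.le
      linarith [heq ▸ this]
    by_contra hneg
    push_neg at hneg
    have hDneg : D < 0 := hneg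
    have hC1 : (0:ℝ) < C + 1 := by linarith
    have hq : (0:ℝ) < -D / (2*(C+1)) := by
      apply div_pos (by linarith) (by linarith)
    set t := min 1 (-D/(2*(C+1))) with htdef
    have ht0 : 0 < t := lt_min one_pos hq
    have ht1 : t ≤ 1 := min_le_left _ _
    have hDt' := hDt t ht0 ht1
    have htC : t * C ≤ (-D/(2*(C+1))) * (C+1) :=
      mul_le_mul (min_le_right _ _) (by linarith) (by linarith) hq.le
    have hcalc : (-D/(2*(C+1))) * (C+1) = -D/2 := by
      field_simp
    rw [hcalc] at htC
    clear_value t C D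
    linarith
  refine ⟨main, ⟨(1 / θ) • (x - xb), main, ?_⟩⟩
  rw [norm_smul, Real.norm_eq_abs, abs_of_pos (by positivity : (0:ℝ) < 1/θ)]
  rw [one_div, inv_mul_eq_div]
end

section
/- Let E be a real inner product space, let φ : E → ℝ be ρ-weakly convex, let θ > 0 with θ·ρ < 1, and suppose P : E → E satisfies: for every x ∈ E, P(x) minimizes y ↦ φ(y) + ‖y − x‖²/(2θ) over E. Define the Moreau envelope φ_θ(x) = φ(P(x)) + ‖P(x) − x‖²/(2θ). Then φ_θ is differentiable at every x ∈ E with gradient ∇φ_θ(x) = (x − P(x))/θ (in the sense of HasGradientAt). -/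
open scoped RealInnerProductSpace BigOperators

/-- The Moreau envelope φ_θ(x) = φ(P(x)) + ‖P(x) − x‖²/(2θ), where P is the
proximal map, is differentiable with gradient ∇φ_θ(x) = (x − P(x))/θ. -/
theorem moreau_envelope_gradient
    {E : Type*} [NormedAddCommGroup E] [InnerProductSpace ℝ E] [CompleteSpace E]
    (φ : E → ℝ) (ρ θ : ℝ) (hρ : 0 ≤ ρ)
    (hwc : ConvexOn ℝ Set.univ (fun x => φ x + ρ / 2 * ‖x‖ ^ 2))
    (hθ : 0 < θ) (hθρ : θ * ρ < 1)
    (P : E → E)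
    (hP : ∀ x : E, ∀ y : E,
      φ (P x) + ‖P x - x‖ ^ 2 / (2 * θ) ≤ φ y + ‖y - x‖ ^ 2 / (2 * θ)) :
    ∀ x : E,
      HasGradientAt (fun z => φ (P z) + ‖P z - z‖ ^ 2 / (2 * θ))
        ((1 / θ) • (x - P x)) x := by
  have hexp : ∀ z : E, ‖z‖^2 = ⟪z, z⟫ := fun z => (real_inner_self_eq_norm_sq z).symm
  have hα : 0 < 1/θ - ρ := by
    have : ρ < 1/θ := by rw [lt_div_iff₀ hθ]; linarith [hθρ]
    linarith
  set α : ℝ := 1/θ - ρ with hαdef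
  clear_value α
  -- Step A: strong minimality
  have key : ∀ u y : E, φ (P u) + ‖P u - u‖^2/(2*θ) + α/4 * ‖y - P u‖^2
      ≤ φ y + ‖y - u‖^2/(2*θ) := by
    intro u y
    have hconv := hwc.2 (Set.mem_univ y) (Set.mem_univ (P u))
      (by norm_num : (0:ℝ) ≤ 1/2) (by norm_num : (0:ℝ) ≤ 1/2) (by norm_num)
    simp only [smul_eq_mul] at hconv
    have hmin := hP u ((1/2:ℝ) • y + (1/2:ℝ) • P u)
    have hpar1 : ‖(1/2:ℝ) • y + (1/2:ℝ) • P u - u‖^2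
        = ‖y - u‖^2/2 + ‖P u - u‖^2/2 - ‖y - P u‖^2/4 := by
      simp only [hexp, inner_sub_left, inner_sub_right, inner_add_left, inner_add_right,
        real_inner_smul_left, real_inner_smul_right]
      rw [real_inner_comm (P u) y, real_inner_comm u y, real_inner_comm u (P u)]
      ring
    have hpar2 : ‖(1/2:ℝ) • y + (1/2:ℝ) • P u‖^2
        = ‖y‖^2/2 + ‖P u‖^2/2 - ‖y - P u‖^2/4 := by
      simp only [hexp, inner_sub_left, inner_sub_right, inner_add_left, inner_add_right,
        real_inner_smul_left, real_inner_smul_right]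
      rw [real_inner_comm (P u) y]
      ring
    rw [hpar1] at hmin
    rw [hpar2] at hconv
    rw [hαdef]
    have e1 : (‖y - u‖^2/2 + ‖P u - u‖^2/2 - ‖y - P u‖^2/4) / (2*θ)
        = ‖y - u‖^2/(2*θ)/2 + ‖P u - u‖^2/(2*θ)/2 - (1/θ) * ‖y - P u‖^2/8 := by
      field_simp; ring
    rw [e1] at hmin
    have e2 : (1/θ - ρ)/4 * ‖y - P u‖^2
        = 2 * ((1/θ) * ‖y - P u‖^2/8) - 2 * (ρ/2 * (‖y - P u‖^2/4)) := by ring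
    rw [e2]
    nlinarith [hmin, hconv]
  intro x
  set L : ℝ := 2/(θ*α) with hLdef
  clear_value L
  have hLpos : 0 < L := hLdef ▸ div_pos two_pos (mul_pos hθ hα)
  -- Step B: Lipschitz property of P
  have hlip : ∀ u : E, ‖P u - P x‖ ≤ L * ‖u - x‖ := by
    intro u
    have k1 := key u (P x)
    have k2 := key x (P u)
    have hsum : α/2 * ‖P u - P x‖^2 ≤ ⟪P u - P x, u - x⟫ / θ := by
      have hid : ‖P x - u‖^2 - ‖P u - u‖^2 + ‖P u - x‖^2 - ‖P x - x‖^2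
          = 2 * ⟪P u - P x, u - x⟫ := by
        simp only [hexp, inner_sub_left, inner_sub_right]
        rw [real_inner_comm u (P x), real_inner_comm u (P u), real_inner_comm x (P u),
          real_inner_comm x (P x)]
        ring
      have hn : ‖P x - P u‖^2 = ‖P u - P x‖^2 := by rw [← norm_neg]; congr 1; abel
      rw [hn] at k1
      have h4 : α/4 * ‖P u - P x‖^2 + α/4 * ‖P u - P x‖^2
          ≤ (‖P x - u‖^2 - ‖P u - u‖^2 + ‖P u - x‖^2 - ‖P x - x‖^2) / (2*θ) := by
        have d1 : (‖P x - u‖^2 - ‖P u - u‖^2 + ‖P u - x‖^2 - ‖P x - x‖^2) / (2*θ)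
            = ‖P x - u‖^2/(2*θ) - ‖P u - u‖^2/(2*θ) + ‖P u - x‖^2/(2*θ) - ‖P x - x‖^2/(2*θ) := by
          ring
        rw [d1]
        linarith
      rw [hid] at h4
      have e : 2 * ⟪P u - P x, u - x⟫ / (2*θ) = ⟪P u - P x, u - x⟫ / θ := by
        field_simp
      rw [e] at h4
      linarith
    rcases eq_or_lt_of_le (norm_nonneg (P u - P x)) with h0 | h0
    · rw [← h0]; positivity
    · have hcs : ⟪P u - P x, u - x⟫ ≤ ‖P u - P x‖ * ‖u - x‖ := real_inner_le_norm _ _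
      have h1 : α/2 * ‖P u - P x‖^2 * θ ≤ ‖P u - P x‖ * ‖u - x‖ := by
        rw [← le_div_iff₀ hθ]
        exact hsum.trans (by gcongr)
      rw [hLdef, div_mul_eq_mul_div, le_div_iff₀ (mul_pos hθ hα)]
      have h2 : ‖P u - P x‖ * (‖P u - P x‖ * (θ * α)) ≤ ‖P u - P x‖ * (2 * ‖u - x‖) := by
        nlinarith [h1]
      exact le_of_mul_le_mul_left h2 h0
  -- Step C: two-sided envelope bounds
  set C : ℝ := L/θ + 1/(2*θ) with hCdef
  clear_value C
  have hCpos : 0 < C := hCdef ▸ add_pos (div_pos hLpos hθ) (by positivity)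
  have hub : ∀ u : E, φ (P u) + ‖P u - u‖^2/(2*θ) - (φ (P x) + ‖P x - x‖^2/(2*θ))
      - ⟪(1/θ) • (x - P x), u - x⟫ ≤ C * (‖u - x‖ * ‖u - x‖) := by
    intro u
    have h1 := hP u (P x)
    have h2 : ‖P x - u‖^2 = ‖P x - x‖^2 + 2*⟪x - P x, u - x⟫ + ‖u - x‖^2 := by
      simp only [hexp, inner_sub_left, inner_sub_right]
      rw [real_inner_comm u (P x), real_inner_comm u x, real_inner_comm x (P x)]
      ring
    rw [h2] at h1
    have h3 : (‖P x - x‖^2 + 2*⟪x - P x, u - x⟫ + ‖u - x‖^2)/(2*θ)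
        = ‖P x - x‖^2/(2*θ) + (1/θ)*⟪x - P x, u - x⟫ + (1/(2*θ))*‖u - x‖^2 := by
      field_simp
    rw [h3] at h1
    rw [real_inner_smul_left]
    have hnn : 0 ≤ (L/θ) * (‖u - x‖ * ‖u - x‖) := by positivity
    have hsq : ‖u - x‖^2 = ‖u - x‖ * ‖u - x‖ := by ring
    rw [hCdef]
    linarith [h1, hnn]
  have hlb : ∀ u : E, -(C * (‖u - x‖ * ‖u - x‖))
      ≤ φ (P u) + ‖P u - u‖^2/(2*θ) - (φ (P x) + ‖P x - x‖^2/(2*θ))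
        - ⟪(1/θ) • (x - P x), u - x⟫ := by
    intro u
    have h1 := hP x (P u)
    have h2 : ‖P u - x‖^2 = ‖P u - u‖^2 + 2*⟪P u - u, u - x⟫ + ‖u - x‖^2 := by
      simp only [hexp, inner_sub_left, inner_sub_right]
      rw [real_inner_comm u (P u), real_inner_comm x (P u), real_inner_comm x u]
      ring
    rw [h2] at h1
    have h3 : (‖P u - u‖^2 + 2*⟪P u - u, u - x⟫ + ‖u - x‖^2)/(2*θ)
        = ‖P u - u‖^2/(2*θ) + (1/θ)*⟪P u - u, u - x⟫ + (1/(2*θ))*‖u - x‖^2 := by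
      field_simp
    rw [h3] at h1
    rw [real_inner_smul_left]
    have hsplit : ⟪P u - u, u - x⟫
        = ⟪P u - P x, u - x⟫ - ⟪x - P x, u - x⟫ - ‖u - x‖^2 := by
      simp only [hexp, inner_sub_left, inner_sub_right]
      ring
    have hcs2 : ⟪P u - P x, u - x⟫ ≤ L * ‖u - x‖ * ‖u - x‖ := by
      calc ⟪P u - P x, u - x⟫ ≤ ‖P u - P x‖ * ‖u - x‖ := real_inner_le_norm _ _
        _ ≤ L * ‖u - x‖ * ‖u - x‖ := by
            exact mul_le_mul_of_nonneg_right (hlip u) (norm_nonneg _)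
    have hcs3 : (1/θ) * ⟪P u - P x, u - x⟫ ≤ (1/θ) * (L * ‖u - x‖ * ‖u - x‖) :=
      mul_le_mul_of_nonneg_left hcs2 (by positivity)
    have hpos : 0 ≤ (1/θ) * ‖u - x‖^2 := by positivity
    rw [hsplit] at h1
    rw [hCdef]
    ring_nf at h1 hcs3 hpos ⊢
    linarith [h1, hcs3, hpos]
  -- Step D: conclude
  rw [hasGradientAt_iff_isLittleO, Asymptotics.isLittleO_iff]
  intro ε hε
  filter_upwards [Metric.ball_mem_nhds x (div_pos hε hCpos)] with u hu
  rw [Metric.mem_ball, dist_eq_norm] at hu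
  beta_reduce
  have hub' := hub u
  have hlb' := hlb u
  rw [Real.norm_eq_abs, abs_le]
  have hC1 : C * (‖u - x‖ * ‖u - x‖) ≤ ε * ‖u - x‖ := by
    rcases eq_or_lt_of_le (norm_nonneg (u - x)) with h0 | h0
    · rw [← h0]; ring_nf; simp
    · have : ‖u - x‖ ≤ ε / C := le_of_lt hu
      calc C * (‖u - x‖ * ‖u - x‖) ≤ C * (ε/C * ‖u - x‖) := by
            apply mul_le_mul_of_nonneg_left _ (le_of_lt hCpos)
            exact mul_le_mul_of_nonneg_right this (norm_nonneg _)
        _ = ε * ‖u - x‖ := by field_simp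
  constructor
  · linarith
  · linarith
end

section
/- Let E be a real inner product space, let φ : E → ℝ be ρ-weakly convex, let θ > 0 with θ·ρ < 1, and suppose P : E → E satisfies: for every x ∈ E, P(x) minimizes y ↦ φ(y) + ‖y − x‖²/(2θ) over E. Then: (a) P is Lipschitz with constant 1/(1 − θ·ρ), i.e., ‖P(x) − P(y)‖ ≤ (1/(1 − θ·ρ))·‖x − y‖ for all x, y; and (b) the map x ↦ (x − P(x))/θ (the gradient of the Moreau envelope φ_θ) is Lipschitz with constant (2 − θ·ρ)/(θ·(1 − θ·ρ)). -/
open scoped RealInnerProductSpace BigOperators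

private lemma norm_combo_sq' {E : Type*} [NormedAddCommGroup E] [InnerProductSpace ℝ E]
    (u y x : E) (t : ℝ) :
    ‖((1-t)•u + t•y) - x‖^2
      = (1-t)*‖u-x‖^2 + t*‖y-x‖^2 - t*(1-t)*‖y-u‖^2 := by
  have h1 : ((1-t)•u + t•y) - x = (u - x) + t•(y-u) := by module
  have h2 : y - x = (u - x) + (y - u) := by abel
  rw [h1, norm_add_sq_real, h2, norm_add_sq_real, norm_smul, real_inner_smul_right]
  simp [Real.norm_eq_abs, mul_pow, sq_abs]
  ring

private lemma strong_min' {E : Type*} [NormedAddCommGroup E] [InnerProductSpace ℝ E]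
    (φ : E → ℝ) (ρ θ : ℝ)
    (hwc : ConvexOn ℝ Set.univ (fun x => φ x + ρ / 2 * ‖x‖ ^ 2))
    (hθ : 0 < θ) (hθρ : θ * ρ < 1)
    (P : E → E)
    (hP : ∀ x : E, ∀ y : E,
      φ (P x) + ‖P x - x‖ ^ 2 / (2 * θ) ≤ φ y + ‖y - x‖ ^ 2 / (2 * θ))
    (x y : E) :
    2*θ*(φ (P x)) + ‖P x - x‖^2 + (1 - θ*ρ)*‖y - P x‖^2
      ≤ 2*θ*(φ y) + ‖y - x‖^2 := by
  have h2θ : (0:ℝ) < 2*θ := by linarith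
  -- cleared-denominator version of hP
  have hP' : ∀ a b : E, 2*θ*(φ (P a)) + ‖P a - a‖^2 ≤ 2*θ*(φ b) + ‖b - a‖^2 := by
    intro a b
    have h := hP a b
    have h' := mul_le_mul_of_nonneg_left h h2θ.le
    have hne : (2*θ) ≠ 0 := ne_of_gt h2θ
    calc 2*θ*(φ (P a)) + ‖P a - a‖^2
        = 2*θ*(φ (P a) + ‖P a - a‖^2/(2*θ)) := by field_simp
      _ ≤ 2*θ*(φ b + ‖b - a‖^2/(2*θ)) := h'
      _ = 2*θ*(φ b) + ‖b - a‖^2 := by field_simp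
  set u := P x with hu
  set s := ‖y - u‖^2 with hs
  have hs0 : 0 ≤ s := by positivity
  set A := 2*θ*(φ y) + ‖y - x‖^2 - (2*θ*(φ u) + ‖u - x‖^2) with hA
  have hA0 : 0 ≤ A := by
    have := hP' x y
    rw [hA]; rw [← hu] at this; linarith
  have step : ∀ t : ℝ, 0 < t → t ≤ 1 → (1 - t) * (1 - θ*ρ) * s ≤ A := by
    intro t ht ht1
    set z := (1-t)•u + t•y with hz
    have h1 := hP' x z
    rw [← hu] at h1
    have hconv := hwc.2 (Set.mem_univ u) (Set.mem_univ y)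
      (by linarith : (0:ℝ) ≤ 1 - t) (le_of_lt ht) (by ring)
    simp only [smul_eq_mul, ← hz] at hconv
    have h2 := mul_le_mul_of_nonneg_left hconv h2θ.le
    have hzx : ‖z - x‖^2 = (1-t)*‖u-x‖^2 + t*‖y-x‖^2 - t*(1-t)*s := by
      rw [hz, hs]; exact norm_combo_sq' u y x t
    have hzz : ‖z‖^2 = (1-t)*‖u‖^2 + t*‖y‖^2 - t*(1-t)*s := by
      have := norm_combo_sq' u y 0 t
      rw [hz, hs]
      simpa using this
    rw [hzx] at h1
    rw [hzz] at h2
    have ht' : t * ((1 - t) * (1 - θ*ρ) * s) ≤ t * A := by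
      rw [hA]; nlinarith [h1, h2]
    exact le_of_mul_le_mul_left ht' ht
  -- limit argument by contradiction
  have goal' : (1 - θ*ρ) * s ≤ A := by
    by_contra hcon
    push_neg at hcon
    have hcc : 0 < 1 - θ*ρ := by linarith
    have hspos : 0 < s := by
      rcases lt_or_eq_of_le hs0 with h | h
      · exact h
      · exfalso; rw [← h] at hcon; simp at hcon; linarith
    have hcs : 0 < (1 - θ*ρ) * s := by positivity
    set t := ((1 - θ*ρ)*s - A)/(2*((1 - θ*ρ)*s)) with htdef
    have htpos : 0 < t := by
      apply div_pos (by linarith) (by linarith)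
    have ht1 : t ≤ 1 := by
      rw [htdef, div_le_one (by linarith)]
      linarith
    have hst := step t htpos ht1
    have htcs : t * (2*((1 - θ*ρ)*s)) = (1 - θ*ρ)*s - A := by
      rw [htdef, div_mul_cancel₀]
      positivity
    nlinarith
  rw [hA] at goal'
  linarith

/-- (a) The proximal map P = prox_{θφ} is 1/(1 − θρ)-Lipschitz, and (b) the gradient
x ↦ (x − P(x))/θ of the Moreau envelope is (2 − θρ)/(θ(1 − θρ))-Lipschitz. -/
theorem prox_and_moreau_gradient_lipschitz
    {E : Type*} [NormedAddCommGroup E] [InnerProductSpace ℝ E]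
    (φ : E → ℝ) (ρ θ : ℝ) (hρ : 0 ≤ ρ)
    (hwc : ConvexOn ℝ Set.univ (fun x => φ x + ρ / 2 * ‖x‖ ^ 2))
    (hθ : 0 < θ) (hθρ : θ * ρ < 1)
    (P : E → E)
    (hP : ∀ x : E, ∀ y : E,
      φ (P x) + ‖P x - x‖ ^ 2 / (2 * θ) ≤ φ y + ‖y - x‖ ^ 2 / (2 * θ)) :
    (∀ x y : E, ‖P x - P y‖ ≤ (1 / (1 - θ * ρ)) * ‖x - y‖) ∧
    (∀ x y : E,
      ‖(1 / θ) • (x - P x) - (1 / θ) • (y - P y)‖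
        ≤ (2 - θ * ρ) / (θ * (1 - θ * ρ)) * ‖x - y‖) := by
  have h1ρ : (0:ℝ) < 1 - θ * ρ := by linarith
  have mono : ∀ x y : E, (1 - θ*ρ) * ‖P x - P y‖^2 ≤ ⟪P x - P y, x - y⟫ := by
    intro x y
    have k1 := strong_min' φ ρ θ hwc hθ hθρ P hP x (P y)
    have k2 := strong_min' φ ρ θ hwc hθ hθρ P hP y (P x)
    set u := P x; set v := P y
    have e1 : ‖v - x‖^2 = ‖v‖^2 - 2*⟪v,x⟫ + ‖x‖^2 := norm_sub_sq_real v x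
    have e2 : ‖u - x‖^2 = ‖u‖^2 - 2*⟪u,x⟫ + ‖x‖^2 := norm_sub_sq_real u x
    have e3 : ‖u - y‖^2 = ‖u‖^2 - 2*⟪u,y⟫ + ‖y‖^2 := norm_sub_sq_real u y
    have e4 : ‖v - y‖^2 = ‖v‖^2 - 2*⟪v,y⟫ + ‖y‖^2 := norm_sub_sq_real v y
    have e5 : ⟪u - v, x - y⟫ = ⟪u,x⟫ - ⟪u,y⟫ - ⟪v,x⟫ + ⟪v,y⟫ := by
      rw [inner_sub_left, inner_sub_right, inner_sub_right]; ring
    have e6 : ‖v - u‖^2 = ‖u - v‖^2 := by rw [norm_sub_rev]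
    rw [e6] at k1
    rw [e5]
    rw [e1, e2] at k1
    rw [e3, e4] at k2
    linarith
  have lipP : ∀ x y : E, ‖P x - P y‖ ≤ (1 / (1 - θ * ρ)) * ‖x - y‖ := by
    intro x y
    have hm := mono x y
    have hcs := real_inner_le_norm (P x - P y) (x - y)
    rcases eq_or_lt_of_le (norm_nonneg (P x - P y)) with h | h
    · rw [← h]; positivity
    · have h1 : (1 - θ*ρ) * ‖P x - P y‖ ≤ ‖x - y‖ := by
        have := le_trans hm hcs
        nlinarith
      have : (1 / (1 - θ * ρ)) * ((1 - θ*ρ) * ‖P x - P y‖) ≤ (1 / (1 - θ * ρ)) * ‖x - y‖ :=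
        mul_le_mul_of_nonneg_left h1 (by positivity)
      have heq : (1 / (1 - θ * ρ)) * ((1 - θ*ρ) * ‖P x - P y‖) = ‖P x - P y‖ := by
        field_simp
      linarith
  refine ⟨lipP, fun x y => ?_⟩
  have htri : ‖(1 / θ) • (x - P x) - (1 / θ) • (y - P y)‖
      ≤ (1/θ) * (‖x - y‖ + ‖P x - P y‖) := by
    have h1 : (1 / θ) • (x - P x) - (1 / θ) • (y - P y)
        = (1/θ) • ((x - y) - (P x - P y)) := by module
    rw [h1, norm_smul]
    have : ‖(x - y) - (P x - P y)‖ ≤ ‖x - y‖ + ‖P x - P y‖ := norm_sub_le _ _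
    have h1θ : ‖(1:ℝ)/θ‖ = 1/θ := by
      rw [Real.norm_eq_abs, abs_of_pos (by positivity)]
    rw [h1θ]
    exact mul_le_mul_of_nonneg_left this (by positivity)
  have hb := lipP x y
  have key : (1/θ) * (‖x - y‖ + ‖P x - P y‖)
      ≤ (2 - θ * ρ) / (θ * (1 - θ * ρ)) * ‖x - y‖ := by
    have hxy : 0 ≤ ‖x - y‖ := norm_nonneg _
    have hb2 : ‖P x - P y‖ ≤ ‖x - y‖ / (1 - θ*ρ) := by
      rw [one_div, inv_mul_eq_div] at hb
      exact hb
    have hb' : ‖P x - P y‖ * (1 - θ*ρ) ≤ ‖x - y‖ := (le_div_iff₀ h1ρ).mp hb2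
    have hstep : (‖x - y‖ + ‖P x - P y‖) * (1 - θ*ρ) ≤ (2 - θ*ρ) * ‖x - y‖ := by
      nlinarith [hb']
    rw [div_mul_eq_mul_div, div_mul_eq_mul_div,
      div_le_div_iff₀ hθ (by positivity : (0:ℝ) < θ * (1 - θ*ρ))]
    nlinarith [mul_le_mul_of_nonneg_right hstep hθ.le]
  linarith
end

section
/- Let E be a real inner product space, let Φ : E → ℝ be C-weakly convex, let ρ̄ > C, let x ∈ E, and suppose x̄ minimizes y ↦ Φ(y) + (ρ̄/2)·‖y − x‖² over E. Then Φ(x̄) − Φ(x) ≤ (C/2 − ρ̄)·‖x̄ − x‖². -/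
open scoped RealInnerProductSpace BigOperators

/-- Descent property of the proximal point of a C-weakly convex function:
Φ(xb) − Φ(x) ≤ (C/2 − ρ̄)·‖xb − x‖². -/
theorem prox_point_descent
    {E : Type*} [NormedAddCommGroup E] [InnerProductSpace ℝ E]
    (Φ : E → ℝ) (C ρ' : ℝ) (hC : 0 ≤ C)
    (hwc : ConvexOn ℝ Set.univ (fun x => Φ x + C / 2 * ‖x‖ ^ 2))
    (hρ' : C < ρ') (x xb : E)
    (hmin : ∀ y : E,
      Φ xb + ρ' / 2 * ‖xb - x‖ ^ 2 ≤ Φ y + ρ' / 2 * ‖y - x‖ ^ 2) :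
    Φ xb - Φ x ≤ (C / 2 - ρ') * ‖xb - x‖ ^ 2 := by
  have key : ∀ t : ℝ, 0 < t → t ≤ 1 →
      Φ xb - Φ x ≤ (C / 2 * (1 - t) + ρ' / 2 * (t - 2)) * ‖xb - x‖ ^ 2 := by
    intro t ht0 ht1
    have hconv := hwc.2 (Set.mem_univ xb) (Set.mem_univ x)
      (show (0:ℝ) ≤ 1 - t by linarith) (show (0:ℝ) ≤ t from ht0.le)
      (show (1 - t) + t = 1 by ring)
    simp only at hconv
    have hmin' := hmin ((1 - t) • xb + t • x)
    have hs : (1 - t) • xb + t • x - x = (1 - t) • (xb - x) := by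
      rw [smul_sub, sub_smul, sub_smul, one_smul, one_smul]
      abel
    have hnorm1 : ‖(1 - t) • xb + t • x - x‖ ^ 2 = (1 - t) ^ 2 * ‖xb - x‖ ^ 2 := by
      rw [hs, norm_smul, mul_pow, Real.norm_eq_abs, sq_abs]
    have hnorm2 : ‖(1 - t) • xb + t • x‖ ^ 2
        = (1 - t) ^ 2 * ‖xb‖ ^ 2 + 2 * ((1 - t) * t) * ⟪xb, x⟫ + t ^ 2 * ‖x‖ ^ 2 := by
      rw [← real_inner_self_eq_norm_sq, ← real_inner_self_eq_norm_sq,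
        ← real_inner_self_eq_norm_sq]
      simp only [inner_add_left, inner_add_right, real_inner_smul_left,
        real_inner_smul_right]
      rw [real_inner_comm x xb]; ring
    have hsub : ‖xb - x‖ ^ 2 = ‖xb‖ ^ 2 - 2 * ⟪xb, x⟫ + ‖x‖ ^ 2 := by
      rw [← real_inner_self_eq_norm_sq, ← real_inner_self_eq_norm_sq,
        ← real_inner_self_eq_norm_sq]
      simp only [inner_sub_left, inner_sub_right]
      rw [real_inner_comm x xb]; ring
    simp only [smul_eq_mul] at hconv
    have eρ : ρ' / 2 * ‖(1 - t) • xb + t • x - x‖ ^ 2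
        = ρ' / 2 * ((1 - t) ^ 2 * ‖xb - x‖ ^ 2) := by rw [hnorm1]
    have eC : C / 2 * ‖(1 - t) • xb + t • x‖ ^ 2
        = C / 2 * ((1 - t) ^ 2 * ‖xb‖ ^ 2 + 2 * ((1 - t) * t) * ⟪xb, x⟫
          + t ^ 2 * ‖x‖ ^ 2) := by rw [hnorm2]
    have hsubC : C / 2 * (t * (1 - t)) * ‖xb - x‖ ^ 2
        = C / 2 * (t * (1 - t)) * (‖xb‖ ^ 2 - 2 * ⟪xb, x⟫ + ‖x‖ ^ 2) := by rw [hsub]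
    have hρN : ρ' / 2 * ((1 - t) ^ 2 * ‖xb - x‖ ^ 2)
        = ρ' / 2 * ‖xb - x‖ ^ 2 - ρ' / 2 * (2 * t - t ^ 2) * ‖xb - x‖ ^ 2 := by ring
    have hcomb : t * Φ xb - t * Φ x
        ≤ C / 2 * (t * (1 - t)) * ‖xb - x‖ ^ 2
          - ρ' / 2 * (2 * t - t ^ 2) * ‖xb - x‖ ^ 2 := by
      linarith [hmin', hconv, eρ, eC, hsubC, hρN]
    have h4 : 0 ≤ (ρ' - C) * (t * t) * ‖xb - x‖ ^ 2 :=
      mul_nonneg (mul_nonneg (by linarith) (mul_nonneg ht0.le ht0.le))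
        (sq_nonneg _)
    nlinarith [hcomb, h4, mul_pos ht0 ht0]
  have hlim : Filter.Tendsto
      (fun t : ℝ => (C / 2 * (1 - t) + ρ' / 2 * (t - 2)) * ‖xb - x‖ ^ 2)
      (nhdsWithin 0 (Set.Ioi 0)) (nhds ((C / 2 - ρ') * ‖xb - x‖ ^ 2)) := by
    have : Filter.Tendsto
        (fun t : ℝ => (C / 2 * (1 - t) + ρ' / 2 * (t - 2)) * ‖xb - x‖ ^ 2)
        (nhds 0) (nhds ((C / 2 * (1 - 0) + ρ' / 2 * (0 - 2)) * ‖xb - x‖ ^ 2)) := by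
      apply Continuous.tendsto
      continuity
    have h2 := this.mono_left (nhdsWithin_le_nhds (s := Set.Ioi (0:ℝ)))
    convert h2 using 2
    ring
  refine ge_of_tendsto hlim ?_
  filter_upwards [self_mem_nhdsWithin,
    eventually_nhdsWithin_of_eventually_nhds (eventually_lt_nhds (by norm_num : (0:ℝ) < 1))]
    with t ht ht1
  exact key t ht (le_of_lt ht1)
end

section
/- Let E be a real inner product space, let h : E → ℝ be ρ₁-weakly convex, let x, x̄ ∈ E, let u ∈ ℝ, let s ∈ ℝ be a subgradient of the hinge function at u, and let w be a ρ₁-subgradient of h at x. Then [h(x̄)]_+ − [u]_+ ≥ s·(h(x) − u) + s·⟪w, x̄ − x⟫ − (ρ₁/2)·‖x̄ − x‖². -/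
open scoped RealInnerProductSpace BigOperators

/-- Key per-constraint inequality: if s is a subgradient of the hinge function at u
and w is a ρ₁-subgradient of h at x, then
[h(xb)]_+ − [u]_+ ≥ s·(h(x) − u) + s·⟪w, xb − x⟫ − (ρ₁/2)·‖xb − x‖². -/
theorem hinge_estimator_inequality
    {E : Type*} [NormedAddCommGroup E] [InnerProductSpace ℝ E]
    (h : E → ℝ) (ρ₁ : ℝ) (hρ₁ : 0 ≤ ρ₁)
    (hwc : ConvexOn ℝ Set.univ (fun x => h x + ρ₁ / 2 * ‖x‖ ^ 2))
    (x xb : E) (u s : ℝ)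
    -- s is a subgradient of the hinge function at u
    (hs : ∀ z : ℝ, max z 0 ≥ max u 0 + s * (z - u))
    -- w is a ρ₁-subgradient of h at x
    (w : E)
    (hw : ∀ y : E, h y ≥ h x + ⟪w, y - x⟫ - ρ₁ / 2 * ‖y - x‖ ^ 2) :
    max (h xb) 0 - max u 0
      ≥ s * (h x - u) + s * ⟪w, xb - x⟫ - ρ₁ / 2 * ‖xb - x‖ ^ 2 := by
  have hs0 : 0 ≤ s := by
    have h1 := hs (u - (|u| + 1))
    have h2 : max (u - (|u| + 1)) 0 = 0 := by
      apply max_eq_right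
      have := abs_nonneg u
      have := le_abs_self u
      linarith
    have h3 : 0 ≤ max u 0 := le_max_right _ _
    rw [h2] at h1
    nlinarith [abs_nonneg u]
  have hs1 : s ≤ 1 := by
    have h1 := hs (u + 1)
    have h2 : max (u + 1) 0 ≤ max u 0 + 1 := by
      rcases le_total (u + 1) 0 with hc | hc
      · simp [max_eq_right hc]; positivity
      · rw [max_eq_left hc]
        have : u ≤ max u 0 := le_max_left _ _
        linarith
    linarith
  have key := hs (h xb)
  have hw' := hw xb
  have hnn : (0:ℝ) ≤ ‖xb - x‖ ^ 2 := by positivity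
  nlinarith [mul_le_mul_of_nonneg_right hs1 (mul_nonneg (by linarith : (0:ℝ) ≤ ρ₁/2) hnn)]
end

section
/- (Key descent inequality for the hinge penalty method.) Let E be a real inner product space, let F : E → ℝ be ρ₀-weakly convex, let h_k : E → ℝ be ρ₁-weakly convex for k = 1, …, m (m ≥ 1), let β > 0, and let Φ(x) = F(x) + (β/m)·Σ_{k=1}^m [h_k(x)]_+. Set C = ρ₀ + β·ρ₁ and ρ̄ = 2C. Let x ∈ E and suppose x̄ minimizes y ↦ Φ(y) + (ρ̄/2)·‖y − x‖² over E. Let v be a ρ₀-subgradient of F at x, and for each k let u_k ∈ ℝ, let s_k be a subgradient of the hinge function at u_k, and let w_k be a ρ₁-subgradient of h_k at x. Then ⟪v + (β/m)·Σ_{k=1}^m s_k·w_k, x̄ − x⟫ ≤ −(ρ̄/2)·‖x̄ − x‖² + (β/m)·Σ_{k=1}^m ([h_k(x)]_+ − [u_k]_+ − s_k·(h_k(x) − u_k)). -/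
open scoped RealInnerProductSpace BigOperators

open Set Filter Topology

/-! The function Φ + (C/2)‖·‖² is convex: the positive part of a ρ₁-weakly convex function is
ρ₁-weakly convex, and the weights β/m add up to β. Hence the proximal objective Φ + C‖· − x‖² is
C-strongly convex, and at its minimizer x̄ quadratic growth gives
Φ(x̄) + (3C/2)‖x̄ − x‖² ≤ Φ(x). On the other hand the subgradients give the lower model
Φ(x̄) ≥ Φ(x) + ⟪v + (β/m) Σ s_k w_k, x̄ − x⟫ − (C/2)‖x̄ − x‖² − (β/m) Σ_k gap_k, where
gap_k = [h_k(x)]_+ − [u_k]_+ − s_k (h_k(x) − u_k); this uses 0 ≤ s_k ≤ 1. Comparing the two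
bounds gives the inequality. -/

lemma hinge_subgradient_mem_Icc {u s : ℝ} (hs : ∀ z : ℝ, max u 0 + s * (z - u) ≤ max z 0) :
    s ∈ Icc (0 : ℝ) 1 := by
  have below := hs (u - 1)
  have above := hs (u + 1)
  constructor
  · have : max (u - 1) 0 ≤ max u 0 := max_le_max (by linarith) le_rfl
    linarith
  · have : max (u + 1) 0 ≤ max u 0 + 1 := max_le (by linarith [le_max_left u 0]) (by positivity)
    linarith

lemma ConvexOn.sum {𝕜 E ι : Type*} [Field 𝕜] [LinearOrder 𝕜] [IsStrictOrderedRing 𝕜]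
    [AddCommGroup E] [Module 𝕜 E] {s : Set E} {t : Finset ι} {f : ι → E → 𝕜}
    (hs : Convex 𝕜 s) (hf : ∀ i ∈ t, ConvexOn 𝕜 s (f i)) :
    ConvexOn 𝕜 s fun x => ∑ i ∈ t, f i x := by
  classical
  induction t using Finset.induction_on with
  | empty => simpa using convexOn_const (0 : 𝕜) hs
  | insert i t hi ih =>
    simp only [Finset.sum_insert hi]
    exact (hf i (Finset.mem_insert_self _ _)).add
      (ih fun j hj => hf j (Finset.mem_insert_of_mem hj))

section

variable {E : Type*} [NormedAddCommGroup E] [InnerProductSpace ℝ E]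

lemma hinge_comp_model_le {g : E → ℝ} {ρ u s : ℝ} {x y w : E} (hρ : 0 ≤ ρ)
    (hs : ∀ z : ℝ, max u 0 + s * (z - u) ≤ max z 0)
    (hw : g x + ⟪w, y - x⟫ - ρ / 2 * ‖y - x‖ ^ 2 ≤ g y) :
    max u 0 + s * (g x - u) + s * ⟪w, y - x⟫ - ρ / 2 * ‖y - x‖ ^ 2 ≤ max (g y) 0 := by
  -- `s ≥ 0` carries the lower model of `g` through the hinge, `s ≤ 1` caps the curvature loss.
  obtain ⟨hs₀, hs₁⟩ := hinge_subgradient_mem_Icc hs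
  have hinge := hs (g y)
  have curvature : 0 ≤ (1 - s) * (ρ / 2 * ‖y - x‖ ^ 2) := by
    have := sub_nonneg.2 hs₁
    positivity
  linarith [mul_le_mul_of_nonneg_left hw hs₀]

lemma convexOn_sq_norm {s : Set E} (hs : Convex ℝ s) : ConvexOn ℝ s fun x : E => ‖x‖ ^ 2 :=
  (convexOn_norm hs).pow (fun _ _ => norm_nonneg _) 2

lemma ConvexOn.max_zero_add_sq_norm {s : Set E} {g : E → ℝ} {ρ : ℝ} (hρ : 0 ≤ ρ)
    (hg : ConvexOn ℝ s fun x => g x + ρ / 2 * ‖x‖ ^ 2) :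
    ConvexOn ℝ s fun x => max (g x) 0 + ρ / 2 * ‖x‖ ^ 2 := by
  have hq : ConvexOn ℝ s fun x : E => ρ / 2 * ‖x‖ ^ 2 :=
    (convexOn_sq_norm hg.1).smul (by positivity)
  refine (hg.sup hq).congr fun x _ => ?_
  rw [Pi.sup_apply, ← max_add_add_right, zero_add]

lemma convexOn_hinge_penalty_add_sq_norm {s : Set E} {m : ℕ} (hm : 1 ≤ m) {F : E → ℝ}
    {h : Fin m → E → ℝ} {ρ₀ ρ₁ β : ℝ} (hρ₁ : 0 ≤ ρ₁) (hβ : 0 ≤ β)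
    (hF : ConvexOn ℝ s fun x => F x + ρ₀ / 2 * ‖x‖ ^ 2)
    (hh : ∀ k, ConvexOn ℝ s fun x => h k x + ρ₁ / 2 * ‖x‖ ^ 2) :
    ConvexOn ℝ s fun x =>
      (F x + β / m * ∑ k, max (h k x) 0) + (ρ₀ + β * ρ₁) / 2 * ‖x‖ ^ 2 := by
  have hsum := (ConvexOn.sum (t := Finset.univ) hF.1 fun k _ =>
    (hh k).max_zero_add_sq_norm hρ₁).smul (div_nonneg hβ m.cast_nonneg)
  refine (hF.add hsum).congr fun x _ => ?_
  have : (m : ℝ) ≠ 0 := by positivity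
  simp only [Pi.add_apply, smul_eq_mul, Finset.sum_add_distrib, Finset.sum_const,
    Finset.card_univ, Fintype.card_fin, nsmul_eq_mul]
  field_simp
  ring

lemma ConvexOn.strongConvexOn_add_sq_norm_sub {s : Set E} {g : E → ℝ} {μ ν : ℝ}
    (hg : ConvexOn ℝ s fun x => g x + μ / 2 * ‖x‖ ^ 2) (a : E) :
    StrongConvexOn s ν fun x => g x + (μ + ν) / 2 * ‖x - a‖ ^ 2 := by
  rw [strongConvexOn_iff_convex]
  have affine : ConvexOn ℝ s fun x => -(μ + ν) * ⟪a, x⟫ + (μ + ν) / 2 * ‖a‖ ^ 2 :=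
    ((-(μ + ν)) • (innerSL ℝ a).toLinearMap).convexOn hg.1 |>.add_const _
  refine (hg.add affine).congr fun x _ => ?_
  simp only [Pi.add_apply, norm_sub_sq_real, real_inner_comm a x]
  ring

lemma StrongConvexOn.add_sq_norm_sub_le_of_isMinOn {f : E → ℝ} {m : ℝ} {a : E}
    (hf : StrongConvexOn univ m f) (ha : IsMinOn f univ a) (y : E) :
    f a + m / 2 * ‖y - a‖ ^ 2 ≤ f y := by
  -- Divide the convexity inequality on the segment `[a, y]` by `t` and let `t → 0⁺`.
  have segment : ∀ t ∈ Ioo (0 : ℝ) 1, f a + (1 - t) * (m / 2 * ‖y - a‖ ^ 2) ≤ f y := by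
    rintro t ⟨ht₀, ht₁⟩
    have hmin := isMinOn_univ_iff.1 ha ((1 - t) • a + t • y)
    have hconv := hf.2 (mem_univ a) (mem_univ y) (sub_nonneg.2 ht₁.le) ht₀.le (by ring)
    rw [norm_sub_rev, smul_eq_mul, smul_eq_mul] at hconv
    nlinarith
  have hlim : Tendsto (fun t : ℝ => f a + (1 - t) * (m / 2 * ‖y - a‖ ^ 2)) (𝓝[>] 0)
      (𝓝 (f a + m / 2 * ‖y - a‖ ^ 2)) :=
    tendsto_nhdsWithin_of_tendsto_nhds (Continuous.tendsto' (by fun_prop) 0 _ (by ring))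
  exact le_of_tendsto hlim (eventually_of_mem (Ioo_mem_nhdsGT one_pos) segment)

lemma hinge_penalty_model_le {m : ℕ} (hm : 1 ≤ m) {h : Fin m → E → ℝ} {ρ₁ β : ℝ}
    (hρ₁ : 0 ≤ ρ₁) (hβ : 0 ≤ β) {u s : Fin m → ℝ}
    (hs : ∀ k, ∀ z : ℝ, max (u k) 0 + s k * (z - u k) ≤ max z 0) {x y : E} {w : Fin m → E}
    (hw : ∀ k, h k x + ⟪w k, y - x⟫ - ρ₁ / 2 * ‖y - x‖ ^ 2 ≤ h k y) :
    β / m * ∑ k, max (h k x) 0 + ⟪(β / m) • ∑ k, s k • w k, y - x⟫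
        - β * ρ₁ / 2 * ‖y - x‖ ^ 2
        - β / m * ∑ k, (max (h k x) 0 - max (u k) 0 - s k * (h k x - u k))
      ≤ β / m * ∑ k, max (h k y) 0 := by
  have hsum := Finset.sum_le_sum fun k (_ : k ∈ Finset.univ) =>
    hinge_comp_model_le hρ₁ (hs k) (hw k)
  have : (m : ℝ) ≠ 0 := by positivity
  calc _ = β / m * ∑ k, (max (u k) 0 + s k * (h k x - u k) + s k * ⟪w k, y - x⟫
          - ρ₁ / 2 * ‖y - x‖ ^ 2) := by
        simp only [sum_inner, real_inner_smul_left,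
          Finset.sum_add_distrib, Finset.sum_sub_distrib, Finset.sum_const, Finset.card_univ,
          Fintype.card_fin, nsmul_eq_mul]
        field_simp
        ring
    _ ≤ _ := mul_le_mul_of_nonneg_left hsum (by positivity)

end

theorem hinge_penalty_descent_inequality_general
    {E : Type*} [NormedAddCommGroup E] [InnerProductSpace ℝ E]
    (m : ℕ) (hm : 1 ≤ m) (F : E → ℝ) (h : Fin m → E → ℝ)
    (ρ₀ ρ₁ β : ℝ) (hρ₁ : 0 ≤ ρ₁) (hβ : 0 < β)
    -- F is ρ₀-weakly convex, each h_k is ρ₁-weakly convex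
    (hFwc : ConvexOn ℝ Set.univ (fun x => F x + ρ₀ / 2 * ‖x‖ ^ 2))
    (hhwc : ∀ k, ConvexOn ℝ Set.univ (fun x => h k x + ρ₁ / 2 * ‖x‖ ^ 2))
    (x xb : E)
    -- xb minimizes y ↦ Φ(y) + (ρ̄/2)‖y − x‖² with ρ̄ = 2(ρ₀ + β·ρ₁)
    (hmin : ∀ y : E,
      (F xb + β / m * ∑ k, max (h k xb) 0)
          + 2 * (ρ₀ + β * ρ₁) / 2 * ‖xb - x‖ ^ 2
        ≤ (F y + β / m * ∑ k, max (h k y) 0)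
          + 2 * (ρ₀ + β * ρ₁) / 2 * ‖y - x‖ ^ 2)
    -- v is a ρ₀-subgradient of F at x
    (v : E)
    (hv : ∀ y : E, F y ≥ F x + ⟪v, y - x⟫ - ρ₀ / 2 * ‖y - x‖ ^ 2)
    (u s : Fin m → ℝ)
    -- s_k is a subgradient of the hinge function at u_k
    (hs : ∀ k, ∀ z : ℝ, max z 0 ≥ max (u k) 0 + s k * (z - u k))
    -- w_k is a ρ₁-subgradient of h_k at x
    (w : Fin m → E)
    (hw : ∀ k, ∀ y : E, h k y ≥ h k x + ⟪w k, y - x⟫ - ρ₁ / 2 * ‖y - x‖ ^ 2) :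
    ⟪v + (β / m) • ∑ k, s k • w k, xb - x⟫
      ≤ -(2 * (ρ₀ + β * ρ₁) / 2) * ‖xb - x‖ ^ 2
        + β / m * ∑ k, (max (h k x) 0 - max (u k) 0 - s k * (h k x - u k)) := by
  have hstrong := (convexOn_hinge_penalty_add_sq_norm hm hρ₁ hβ.le hFwc hhwc)
    |>.strongConvexOn_add_sq_norm_sub (ν := ρ₀ + β * ρ₁) x
  have growth := hstrong.add_sq_norm_sub_le_of_isMinOn
    (isMinOn_univ_iff.2 fun y => by simpa only [← two_mul] using hmin y) x
  simp only [sub_self, norm_zero, norm_sub_rev x xb] at growth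
  have model := hinge_penalty_model_le hm hρ₁ hβ.le hs (fun k => hw k xb)
  rw [inner_add_left]
  linarith [hv xb]

/-- Key descent inequality for the hinge penalty method: with C = ρ₀ + β·ρ₁,
ρ̄ = 2C, and xb the proximal point of Φ at x with parameter 1/ρ̄,
⟪v + (β/m)·Σ_k s_k·w_k, xb − x⟫ ≤ −(ρ̄/2)‖xb − x‖²
  + (β/m)·Σ_k ([h_k(x)]_+ − [u_k]_+ − s_k(h_k(x) − u_k)). -/
theorem hinge_penalty_descent_inequality
    {E : Type*} [NormedAddCommGroup E] [InnerProductSpace ℝ E]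
    (m : ℕ) (hm : 1 ≤ m) (F : E → ℝ) (h : Fin m → E → ℝ)
    (ρ₀ ρ₁ β : ℝ) (hρ₀ : 0 ≤ ρ₀) (hρ₁ : 0 ≤ ρ₁) (hβ : 0 < β)
    -- F is ρ₀-weakly convex, each h_k is ρ₁-weakly convex
    (hFwc : ConvexOn ℝ Set.univ (fun x => F x + ρ₀ / 2 * ‖x‖ ^ 2))
    (hhwc : ∀ k, ConvexOn ℝ Set.univ (fun x => h k x + ρ₁ / 2 * ‖x‖ ^ 2))
    (x xb : E)
    -- xb minimizes y ↦ Φ(y) + (ρ̄/2)‖y − x‖² with ρ̄ = 2(ρ₀ + β·ρ₁)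
    (hmin : ∀ y : E,
      (F xb + β / m * ∑ k, max (h k xb) 0)
          + 2 * (ρ₀ + β * ρ₁) / 2 * ‖xb - x‖ ^ 2
        ≤ (F y + β / m * ∑ k, max (h k y) 0)
          + 2 * (ρ₀ + β * ρ₁) / 2 * ‖y - x‖ ^ 2)
    -- v is a ρ₀-subgradient of F at x
    (v : E)
    (hv : ∀ y : E, F y ≥ F x + ⟪v, y - x⟫ - ρ₀ / 2 * ‖y - x‖ ^ 2)
    (u s : Fin m → ℝ)
    -- s_k is a subgradient of the hinge function at u_k
    (hs : ∀ k, ∀ z : ℝ, max z 0 ≥ max (u k) 0 + s k * (z - u k))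
    -- w_k is a ρ₁-subgradient of h_k at x
    (w : Fin m → E)
    (hw : ∀ k, ∀ y : E, h k y ≥ h k x + ⟪w k, y - x⟫ - ρ₁ / 2 * ‖y - x‖ ^ 2) :
    ⟪v + (β / m) • ∑ k, s k • w k, xb - x⟫
      ≤ -(2 * (ρ₀ + β * ρ₁) / 2) * ‖xb - x‖ ^ 2
        + β / m * ∑ k, (max (h k x) 0 - max (u k) 0 - s k * (h k x - u k)) :=
  hinge_penalty_descent_inequality_general m hm F h ρ₀ ρ₁ β hρ₁ hβ hFwc hhwc x xb hmin v hv u s hs w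
    hw
end
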